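/- arXiv:gr-qc/0311068 — 8 statements merged into one kernel-verified Lean document; each statement's English description precedes it below -/
import Mathlib

section
/- Let V be a 5-dimensional real vector space with a nondegenerate symmetric bilinear form g of signature (-,+,+,+,+), and let T : V → V be a linear operator that is g-self-adjoint (g(Tu,v) = g(u,Tv) for all u,v). If T has a timelike eigenvector (an eigenvector v with g(v,v) < 0), then T is diagonalizable over ℝ. -/
open Module

set_option maxHeartbeats 1000000 in
theorem stmt_0 {V : Type*} [AddCommGroup V] [Module ℝ V] [FiniteDimensional ℝ V]
    (hdim : finrank ℝ V = 5)
    (g : LinearMap.BilinForm ℝ V)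
    (hsymm : ∀ u v : V, g u v = g v u)
    (hsig : ∃ b : Basis (Fin 5) ℝ V, ∀ i j, g (b i) (b j) =
      if i = j then (if i = 0 then -1 else 1) else 0)
    (T : V →ₗ[ℝ] V)
    (hsa : ∀ u v : V, g (T u) v = g u (T v))
    (v : V) (hv : v ≠ 0) (lam : ℝ) (hev : T v = lam • v) (htl : g v v < 0) :
    ∃ (b : Basis (Fin 5) ℝ V) (μ : Fin 5 → ℝ), ∀ i, T (b i) = μ i • b i := by
  obtain ⟨b, hb⟩ := hsig
  -- coordinate formula
  have gcoord : ∀ x y : V,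
      g x y = ∑ i, (if i = 0 then (-1:ℝ) else 1) * (b.repr x i * b.repr y i) := by
    intro x y
    conv_lhs => rw [← b.sum_repr x, ← b.sum_repr y]
    simp only [map_sum, map_smul, LinearMap.sum_apply, LinearMap.smul_apply, smul_eq_mul, hb,
      mul_ite, mul_zero, mul_one, mul_neg, Finset.sum_ite_eq, Finset.mem_univ, if_true]
    refine Finset.sum_congr rfl fun i _ => ?_
    by_cases h : i = 0 <;> simp [h] <;> ring
  have gcoord' : ∀ x y : V,
      g x y = -(b.repr x 0 * b.repr y 0) +
        ∑ i ∈ Finset.univ.erase 0, b.repr x i * b.repr y i := by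
    intro x y
    rw [gcoord,
      show (Finset.univ : Finset (Fin 5)) = insert 0 (Finset.univ.erase 0) from
        (Finset.insert_erase (Finset.mem_univ 0)).symm,
      Finset.sum_insert (Finset.notMem_erase _ _)]
    have hrest : ∀ i ∈ Finset.univ.erase (0 : Fin 5),
        (if i = 0 then (-1:ℝ) else 1) * (b.repr x i * b.repr y i)
          = b.repr x i * b.repr y i := fun i hi => by
      rw [if_neg (Finset.ne_of_mem_erase hi), one_mul]
    rw [Finset.sum_congr rfl hrest]
    simp [Finset.erase_insert_eq_erase]
  -- positivity on the orthogonal complement of v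
  have hpos : ∀ u : V, g v u = 0 → u ≠ 0 → 0 < g u u := by
    intro u hvu hu
    set s := Finset.univ.erase (0 : Fin 5) with hs
    set v0 := b.repr v 0
    set u0 := b.repr u 0
    have hvv : -(v0 * v0) + ∑ i ∈ s, b.repr v i * b.repr v i < 0 := by
      rw [← gcoord']; exact htl
    have hvu' : -(v0 * u0) + ∑ i ∈ s, b.repr v i * b.repr u i = 0 := by
      rw [← gcoord']; exact hvu
    have hCS := Finset.sum_mul_sq_le_sq_mul_sq s (fun i => b.repr v i) (fun i => b.repr u i)
    have hA : (0:ℝ) ≤ ∑ i ∈ s, b.repr v i ^ 2 :=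
      Finset.sum_nonneg fun i _ => sq_nonneg _
    have hB : (0:ℝ) ≤ ∑ i ∈ s, b.repr u i ^ 2 :=
      Finset.sum_nonneg fun i _ => sq_nonneg _
    have hsq : ∀ x : V, ∑ i ∈ s, b.repr x i * b.repr x i = ∑ i ∈ s, b.repr x i ^ 2 := by
      intro x; exact Finset.sum_congr rfl fun i _ => (sq (b.repr x i)).symm
    rw [hsq] at hvv
    rw [gcoord', hsq]
    rcases eq_or_lt_of_le hB with hB0 | hB0
    · -- all spatial coordinates of u vanish, so u = 0, contradiction
      exfalso
      have hzero : ∀ i ∈ s, b.repr u i = 0 := by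
        intro i hi
        have := (Finset.sum_eq_zero_iff_of_nonneg
          (fun i _ => sq_nonneg (b.repr u i))).1 hB0.symm i hi
        exact pow_eq_zero_iff (n := 2) (by norm_num) |>.1 this
      have hsum0 : ∑ i ∈ s, b.repr v i * b.repr u i = 0 :=
        Finset.sum_eq_zero fun i hi => by rw [hzero i hi, mul_zero]
      have hv0 : v0 ≠ 0 := by nlinarith
      have hu0 : u0 = 0 := by
        have : v0 * u0 = 0 := by linarith [hvu', hsum0]
        exact (mul_eq_zero.1 this).resolve_left hv0
      apply hu
      have hall : ∀ i, b.repr u i = 0 := by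
        intro i
        by_cases h : i = 0
        · rw [h]; exact hu0
        · exact hzero i (Finset.mem_erase.2 ⟨h, Finset.mem_univ i⟩)
      have h0 : b.repr u = 0 := Finsupp.ext fun i => hall i
      exact b.repr.map_eq_zero_iff.1 h0
    · have hv0sq : (0:ℝ) < v0 * v0 := by nlinarith
      have h1 : (∑ i ∈ s, b.repr v i ^ 2) * (∑ i ∈ s, b.repr u i ^ 2)
          < (v0 * v0) * (∑ i ∈ s, b.repr u i ^ 2) :=
        mul_lt_mul_of_pos_right (by linarith) hB0
      have hC : v0 * u0 = ∑ i ∈ s, b.repr v i * b.repr u i := by linarith [hvu']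
      have h3 : (v0 * v0) * (u0 * u0) < (v0 * v0) * ∑ i ∈ s, b.repr u i ^ 2 := by
        calc (v0 * v0) * (u0 * u0) = (v0 * u0) ^ 2 := by ring
        _ = (∑ i ∈ s, b.repr v i * b.repr u i) ^ 2 := by rw [hC]
        _ ≤ (∑ i ∈ s, b.repr v i ^ 2) * ∑ i ∈ s, b.repr u i ^ 2 := hCS
        _ < (v0 * v0) * ∑ i ∈ s, b.repr u i ^ 2 := h1
      have h4 := lt_of_mul_lt_mul_left h3 (le_of_lt hv0sq)
      linarith
  have hvv_ne : g v v ≠ 0 := ne_of_lt htl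
  -- the orthogonal complement W
  set W : Submodule ℝ V := LinearMap.ker (g v) with hW
  have hvW : v ∉ W := fun h => hvv_ne (LinearMap.mem_ker.1 h)
  have hWmem : ∀ u : V, u ∈ W ↔ g v u = 0 := fun u => LinearMap.mem_ker
  -- T preserves W
  have hTW : ∀ u ∈ W, T u ∈ W := by
    intro u hu
    rw [hWmem] at hu ⊢
    calc g v (T u) = g (T v) u := by rw [hsymm, hsa, hsymm]
    _ = lam * g v u := by rw [hev, map_smul, LinearMap.smul_apply, smul_eq_mul]
    _ = 0 := by rw [hu, mul_zero]
  -- finrank W = 4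
  have hWrank : finrank ℝ W = 4 := by
    have hr : finrank ℝ (LinearMap.range (g v)) = 1 := by
      have hrt : LinearMap.range (g v) = ⊤ := by
        rw [LinearMap.range_eq_top]
        intro c
        exact ⟨(c / g v v) • v, by
          simp only [map_smul, smul_eq_mul]
          field_simp⟩
      rw [hrt]
      simp
    have h2 := LinearMap.finrank_range_add_finrank_ker (g v)
    rw [hr, hdim] at h2
    rw [hW]
    omega
  -- inner product structure on W from g
  letI : Inner ℝ W := ⟨fun x y => g x y⟩
  have hinner : ∀ x y : W, (inner ℝ x y : ℝ) = g x y := fun _ _ => rfl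
  letI core : InnerProductSpace.Core ℝ W :=
    { conj_inner_symm := by
        intro x y
        simpa [hinner] using hsymm y x
      re_inner_nonneg := by
        intro x
        rcases eq_or_ne (x : V) 0 with h | h
        · simp [hinner, h]
        · exact le_of_lt (by simpa [hinner] using hpos x ((hWmem x).1 x.2) h)
      definite := by
        intro x hx
        by_contra h
        have hx0 : (x : V) ≠ 0 := fun h0 => h (Subtype.ext h0)
        have := hpos x ((hWmem x).1 x.2) hx0
        rw [← hinner x x, hx] at this
        exact lt_irrefl 0 this
      add_left := by intro x y z; simp [hinner, map_add]
      smul_left := by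
        intro x y r
        simp [hinner, map_smul] }
  letI : NormedAddCommGroup W := core.toNormedAddCommGroup
  letI : InnerProductSpace ℝ W := InnerProductSpace.ofCore core.toCore
  -- restricted operator
  set T' : W →ₗ[ℝ] W := T.restrict hTW with hT'
  have hT'sym : T'.IsSymmetric := by
    intro x y
    show g (T x) y = g x (T y)
    exact hsa x y
  set E := hT'sym.eigenvectorBasis hWrank with hE
  set ev := hT'sym.eigenvalues hWrank with hev'
  have he : ∀ i, T' (E i) = ev i • E i :=
    fun i => hT'sym.apply_eigenvectorBasis hWrank i
  set f : Fin 4 → V := fun i => (E i : V) with hf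
  have hfW : ∀ i, f i ∈ W := fun i => (E i).2
  have hfli : LinearIndependent ℝ f := by
    have h1 : LinearIndependent ℝ (fun i => E i) := E.toBasis.linearIndependent
    exact h1.map' W.subtype (Submodule.ker_subtype W)
  have hwli : LinearIndependent ℝ (Fin.cons v f : Fin 5 → V) := by
    rw [linearIndependent_fin_cons]
    refine ⟨hfli, fun hmem => hvW ?_⟩
    have hspan : Submodule.span ℝ (Set.range f) ≤ W := by
      rw [Submodule.span_le]
      rintro _ ⟨i, rfl⟩
      exact hfW i
    exact hspan hmem
  let B := basisOfLinearIndependentOfCardEqFinrank hwli (by simp [hdim])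
  refine ⟨B, Fin.cons lam ev, ?_⟩
  intro i
  have hBc : ⇑B = (Fin.cons v f : Fin 5 → V) :=
    coe_basisOfLinearIndependentOfCardEqFinrank hwli _
  have hBi : B i = (Fin.cons v f : Fin 5 → V) i := congrFun hBc i
  rw [hBi]
  induction i using Fin.cases with
  | zero => simpa using hev
  | succ j =>
    simp only [Fin.cons_succ]
    have h2 := congrArg (Subtype.val) (he j)
    rw [LinearMap.restrict_coe_apply] at h2
    simpa [hf] using h2
end

section
/- Let V be a real vector space of dimension n ≥ 4 with a nondegenerate symmetric bilinear form g of Lorentzian signature (one minus, n−1 pluses), and let T : V → V be a g-self-adjoint linear operator. Then T has at least one real spacelike eigenvector, i.e., an eigenvector v with g(v,v) > 0. -/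
open Module

section Helpers

variable {V : Type*} [AddCommGroup V] [Module ℝ V] [FiniteDimensional ℝ V]

private lemma gcoord {n : ℕ} (g : LinearMap.BilinForm ℝ V) (b : Basis (Fin n) ℝ V)
    (hb : ∀ i j, g (b i) (b j) = if i = j then (if (i : ℕ) = 0 then (-1:ℝ) else 1) else 0)
    (u v : V) :
    g u v = ∑ i : Fin n, (if (i : ℕ) = 0 then (-1:ℝ) else 1) * (b.repr u i * b.repr v i) := by
  nth_rewrite 1 [← b.sum_repr u, ← b.sum_repr v]
  simp only [map_sum, map_smul, LinearMap.sum_apply, LinearMap.smul_apply, smul_eq_mul, hb]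
  refine Finset.sum_congr rfl fun i _ => ?_
  rw [Finset.sum_eq_single i]
  · simp; ring
  · intro j _ hj
    simp [hj]
  · intro h; exact absurd (Finset.mem_univ i) h

private lemma factM {n : ℕ} (hn : 4 ≤ n) (hdim : finrank ℝ V = n)
    (g : LinearMap.BilinForm ℝ V)
    (hsymm : ∀ u v : V, g u v = g v u)
    (b : Basis (Fin n) ℝ V)
    (hb : ∀ i j, g (b i) (b j) = if i = j then (if (i : ℕ) = 0 then (-1:ℝ) else 1) else 0)
    (u v : V) (huv : g u v = 0) (huu : g u u ≤ 0) (hvv : g v v ≤ 0) (hu : u ≠ 0) :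
    ∃ t : ℝ, v = t • u := by
  have hn0 : 0 < n := by omega
  set i0 : Fin n := ⟨0, hn0⟩ with hi0
  set E : Submodule ℝ V :=
    Submodule.span ℝ (Set.range fun i : {i : Fin n // (i : ℕ) ≠ 0} => b i.1) with hE
  have hErepr : ∀ x ∈ E, b.repr x i0 = 0 := by
    intro x hx
    have hle : E ≤ LinearMap.ker (b.coord i0) := by
      rw [hE, Submodule.span_le]
      rintro y ⟨i, rfl⟩
      simp only [SetLike.mem_coe, LinearMap.mem_ker, Basis.coord_apply, Basis.repr_self_apply]
      rw [if_neg]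
      intro h
      exact i.2 (by rw [h])
    simpa using hle hx
  have hEpos : ∀ x ∈ E, x ≠ 0 → 0 < g x x := by
    intro x hx hx0
    rw [gcoord g b hb]
    have hterm : ∀ i : Fin n, 0 ≤ (if (i : ℕ) = 0 then (-1:ℝ) else 1) * (b.repr x i * b.repr x i) := by
      intro i
      by_cases h : (i : ℕ) = 0
      · have : i = i0 := Fin.ext (by simpa using h)
        rw [this, hErepr x hx]
        simp
      · rw [if_neg h]
        nlinarith [sq_nonneg (b.repr x i)]
    have hrx : b.repr x ≠ 0 := fun h => hx0 (by simpa using congrArg b.repr.symm h)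
    obtain ⟨j, hj⟩ := Finsupp.ne_iff.1 hrx
    simp only [Finsupp.coe_zero, Pi.zero_apply] at hj
    have hj0 : (j : ℕ) ≠ 0 := by
      intro h
      exact hj (by rw [show j = i0 from Fin.ext (by simpa using h)]; simpa using hErepr x hx)
    have hex : ∃ i ∈ (Finset.univ : Finset (Fin n)), 0 < (if (i : ℕ) = 0 then (-1:ℝ) else 1) * (b.repr x i * b.repr x i) := by
      refine ⟨j, Finset.mem_univ j, ?_⟩
      rw [if_neg hj0]
      have : (0:ℝ) < b.repr x j * b.repr x j := mul_self_pos.2 hj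
      linarith
    exact Finset.sum_pos' (fun i _ => hterm i) hex
  have li : LinearIndependent ℝ (fun i : {i : Fin n // (i : ℕ) ≠ 0} => b i.1) :=
    b.linearIndependent.comp Subtype.val Subtype.val_injective
  have hcard : Fintype.card {i : Fin n // (i : ℕ) ≠ 0} = n - 1 := by
    have he : {i : Fin n // (i : ℕ) ≠ 0} ≃ {i : Fin n // i ≠ i0} :=
      Equiv.subtypeEquivRight (by intro i; constructor
                                  · intro h hh; exact h (by rw [hh])
                                  · intro h hh; exact h (Fin.ext (by simpa using hh)))
    rw [Fintype.card_congr he]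
    have : Fintype.card {i : Fin n // ¬ (i = i0)} = n - 1 := by
      rw [Fintype.card_subtype_compl, Fintype.card_subtype_eq, Fintype.card_fin]
    simpa using this
  have hEdim : finrank ℝ ↥E = n - 1 := by
    rw [hE, finrank_span_eq_card li, hcard]
  set P : Submodule ℝ V := Submodule.span ℝ {u, v} with hP
  have hPE : P ⊓ E = ⊥ := by
    rw [Submodule.eq_bot_iff]
    rintro x ⟨hxP, hxE⟩
    by_contra hx0
    obtain ⟨a, c, hac⟩ := Submodule.mem_span_pair.1 hxP
    have hxx : g x x ≤ 0 := by
      rw [← hac]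
      simp only [map_add, map_smul, LinearMap.add_apply, LinearMap.smul_apply, smul_eq_mul]
      have h1 : g v u = 0 := by rw [hsymm]; exact huv
      rw [huv, h1]
      nlinarith [sq_nonneg a, sq_nonneg c]
    exact absurd (hEpos x hxE hx0) (by linarith)
  have hdimP : finrank ℝ ↥P ≤ 1 := by
    have h1 : finrank ℝ ↥(P ⊔ E) + finrank ℝ ↥(P ⊓ E) = finrank ℝ ↥P + finrank ℝ ↥E :=
      Submodule.finrank_sup_add_finrank_inf_eq P E
    have h2 : finrank ℝ ↥(P ⊔ E) ≤ n := hdim ▸ Submodule.finrank_le _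
    rw [hPE, hEdim] at h1
    simp at h1
    omega
  have hsu : Submodule.span ℝ {u} = P := by
    apply Submodule.eq_of_le_of_finrank_le
    · apply Submodule.span_mono
      simp
    · rw [finrank_span_singleton hu]
      exact hdimP
  have hv : v ∈ Submodule.span ℝ ({u} : Set V) := by
    rw [hsu]
    exact Submodule.subset_span (by simp)
  obtain ⟨t, ht⟩ := Submodule.mem_span_singleton.1 hv
  exact ⟨t, ht.symm⟩

private lemma spectral_dichotomy (g : LinearMap.BilinForm ℝ V)
    (hsymm : ∀ u v : V, g u v = g v u)
    (S : V →ₗ[ℝ] V) (W : Submodule ℝ V)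
    (hWS : ∀ u ∈ W, S u ∈ W)
    (hsaW : ∀ u ∈ W, ∀ v ∈ W, g (S u) v = g u (S v))
    (hpos : ∀ u ∈ W, u ≠ 0 → 0 < g u u) (lam : ℝ) :
    (∃ w ∈ W, w ≠ 0 ∧ ∃ μ : ℝ, μ ≠ lam ∧ S w = μ • w) ∨ (∀ w ∈ W, S w = lam • w) := by
  letI cd : InnerProductSpace.Core ℝ ↥W :=
    { inner := fun x y => g x.1 y.1
      conj_inner_symm := fun x y => by simpa using hsymm y.1 x.1
      re_inner_nonneg := fun x => by
        rcases eq_or_ne x 0 with h | h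
        · simp [h]
        · simpa using (hpos x.1 x.2 (by simpa using h)).le
      definite := fun x hx => by
        by_contra h
        exact absurd hx (ne_of_gt (by simpa using hpos x.1 x.2 (by simpa using h)))
      add_left := fun x y z => by simp
      smul_left := fun x y r => by simp }
  letI : NormedAddCommGroup ↥W := cd.toNormedAddCommGroup
  letI : InnerProductSpace ℝ ↥W := InnerProductSpace.ofCore cd.toCore
  set S' : ↥W →ₗ[ℝ] ↥W := S.restrict hWS with hS'
  have hsym' : S'.IsSymmetric := by
    intro x y
    exact hsaW x.1 x.2 y.1 y.2
  have hrank : finrank ℝ ↥W = finrank ℝ ↥W := rfl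
  set eb := hsym'.eigenvectorBasis hrank with heb
  by_cases hall : ∀ i, hsym'.eigenvalues hrank i = lam
  · right
    have hf : (S ∘ₗ W.subtype) = (lam • W.subtype : ↥W →ₗ[ℝ] V) := by
      apply eb.toBasis.ext
      intro i
      have h1 := hsym'.apply_eigenvectorBasis hrank i
      have h2 : S ((eb i : V)) = ((S' (eb i) : V)) := rfl
      simp only [OrthonormalBasis.coe_toBasis, LinearMap.comp_apply, Submodule.coe_subtype,
        LinearMap.smul_apply]
      rw [h2, h1, hall i]
      simp
      rfl
    intro w hw
    have := congrArg (fun f => f ⟨w, hw⟩) hf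
    simpa using this
  · left
    push_neg at hall
    obtain ⟨i, hi⟩ := hall
    refine ⟨(eb i : V), (eb i).2, ?_, hsym'.eigenvalues hrank i, hi, ?_⟩
    · simpa [Submodule.coe_eq_zero] using eb.toBasis.ne_zero i
    · have h1 := hsym'.apply_eigenvectorBasis hrank i
      have h2 : S ((eb i : V)) = ((S' (eb i) : V)) := rfl
      rw [h2, h1]
      simp
      rfl

end Helpers

theorem stmt_2 {V : Type*} [AddCommGroup V] [Module ℝ V] [FiniteDimensional ℝ V]
    (n : ℕ) (hn : 4 ≤ n) (hdim : finrank ℝ V = n)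
    (g : LinearMap.BilinForm ℝ V)
    (hsymm : ∀ u v : V, g u v = g v u)
    (hsig : ∃ b : Basis (Fin n) ℝ V, ∀ i j, g (b i) (b j) =
      if i = j then (if (i : ℕ) = 0 then -1 else 1) else 0)
    (T : V →ₗ[ℝ] V)
    (hsa : ∀ u v : V, g (T u) v = g u (T v)) :
    ∃ (v : V) (lam : ℝ), v ≠ 0 ∧ T v = lam • v ∧ 0 < g v v := by
  obtain ⟨b, hb⟩ := hsig
  -- nondegeneracy
  have hnd : ∀ x : V, (∀ z : V, g z x = 0) → x = 0 := by
    intro x hx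
    have h0 : ∀ i, b.repr x i = 0 := by
      intro i
      have h1 := gcoord g b hb (b i) x
      rw [hx (b i)] at h1
      rw [Finset.sum_eq_single i] at h1
      · have h1' : (if (i : ℕ) = 0 then (-1:ℝ) else 1) * b.repr x i = 0 := by
          simpa [Basis.repr_self_apply] using h1.symm
        rcases mul_eq_zero.1 h1' with h | h
        · by_cases hi : (i : ℕ) = 0 <;> simp [hi] at h
        · exact h
      · intro j _ hj
        simp [Basis.repr_self_apply, Ne.symm hj]
      · intro h; exact absurd (Finset.mem_univ i) h
    exact b.repr.map_eq_zero_iff.mp (Finsupp.ext h0)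
  -- dimension helpers
  have hker : ∀ f : V →ₗ[ℝ] ℝ, n ≤ finrank ℝ (LinearMap.ker f) + 1 := by
    intro f
    have h1 := LinearMap.finrank_range_add_finrank_ker f
    have h2 : finrank ℝ (LinearMap.range f) ≤ 1 := by
      simpa using Submodule.finrank_le (LinearMap.range f)
    rw [hdim] at h1
    omega
  have hinf : ∀ A B : Submodule ℝ V,
      finrank ℝ ↥A + finrank ℝ ↥B ≤ n + finrank ℝ ↥(A ⊓ B) := by
    intro A B
    have h1 := Submodule.finrank_sup_add_finrank_inf_eq A B
    have h2 : finrank ℝ ↥(A ⊔ B) ≤ n := hdim ▸ Submodule.finrank_le _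
    omega
  by_cases hev : ∃ (w : V) (μ : ℝ), w ≠ 0 ∧ T w = μ • w
  · obtain ⟨w, μ, hw0, hTw⟩ := hev
    rcases lt_trichotomy (g w w) 0 with hneg | hnull | hpos
    · -- timelike eigenvector
      set W := LinearMap.ker (g w) with hW
      have hmem : ∀ u, u ∈ W ↔ g w u = 0 := fun u => LinearMap.mem_ker
      have hWT : ∀ u ∈ W, T u ∈ W := by
        intro u hu
        rw [hmem]
        calc g w (T u) = g (T u) w := hsymm _ _
          _ = g u (T w) := hsa u w
          _ = μ * g u w := by rw [hTw]; simp
          _ = μ * g w u := by rw [hsymm]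
          _ = 0 := by rw [(hmem u).1 hu, mul_zero]
      have hWpos : ∀ u ∈ W, u ≠ 0 → 0 < g u u := by
        intro u hu hu0
        by_contra hle
        push_neg at hle
        obtain ⟨t, htw⟩ := factM hn hdim g hsymm b hb u w
          (by rw [hsymm]; exact (hmem u).1 hu) hle hneg.le hu0
        have hobs : g w w = 0 := by
          nth_rewrite 1 [htw]
          simp only [map_smul, LinearMap.smul_apply, smul_eq_mul]
          rw [hsymm, (hmem u).1 hu, mul_zero]
        linarith
      have hWne : W ≠ ⊥ := by
        intro h
        have h1 := hker (g w)
        rw [hW] at h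
        rw [h, finrank_bot] at h1
        omega
      rcases spectral_dichotomy g hsymm T W hWT (fun u _ v _ => hsa u v) hWpos 0 with
        ⟨x, hxW, hx0, ν, _, hx⟩ | hall
      · exact ⟨x, ν, hx0, hx, hWpos x hxW hx0⟩
      · obtain ⟨x, hxW, hx0⟩ := Submodule.exists_mem_ne_zero_of_ne_bot hWne
        exact ⟨x, 0, hx0, hall x hxW, hWpos x hxW hx0⟩
    · -- null eigenvector
      obtain ⟨z, hz⟩ : ∃ z : V, g z w ≠ 0 := by
        by_contra h
        push_neg at h
        exact hw0 (hnd w h)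
      set k : ℝ := (g z w)⁻¹ with hk
      set f : V →ₗ[ℝ] ℝ := (g z) ∘ₗ T with hf
      set C := LinearMap.ker (g w) ⊓ LinearMap.ker (g z) with hC
      have hmem : ∀ u, u ∈ C ↔ g w u = 0 ∧ g z u = 0 := by
        intro u
        rw [hC, Submodule.mem_inf]
        exact and_congr LinearMap.mem_ker LinearMap.mem_ker
      set S₀ : V →ₗ[ℝ] V := T - k • (f.smulRight w) with hS₀def
      have hS₀ : ∀ u, S₀ u = T u - (k * g z (T u)) • w := by
        intro u
        rw [hS₀def]
        simp only [LinearMap.sub_apply, LinearMap.smul_apply, LinearMap.smulRight_apply,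
          LinearMap.comp_apply, hf, smul_smul]
      -- g w ∘ T on C-vectors
      have hwT : ∀ u, g w (T u) = μ * g w u := by
        intro u
        calc g w (T u) = g (T u) w := hsymm _ _
          _ = g u (T w) := hsa u w
          _ = μ * g u w := by rw [hTw]; simp
          _ = μ * g w u := by rw [hsymm]
      have hCinv : ∀ u ∈ C, S₀ u ∈ C := by
        intro u hu
        obtain ⟨hu1, hu2⟩ := (hmem u).1 hu
        rw [hmem, hS₀]
        constructor
        · simp only [map_sub, map_smul, smul_eq_mul]
          rw [hwT u, hu1, hnull]
          ring
        · simp only [map_sub, map_smul, smul_eq_mul]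
          rw [hk]
          field_simp
          ring
      have hCsym : ∀ u ∈ C, ∀ u' ∈ C, g (S₀ u) u' = g u (S₀ u') := by
        intro u hu u' hu'
        obtain ⟨hu1, hu2⟩ := (hmem u).1 hu
        obtain ⟨hu'1, hu'2⟩ := (hmem u').1 hu'
        rw [hS₀, hS₀]
        simp only [map_sub, map_smul, LinearMap.sub_apply, LinearMap.smul_apply, smul_eq_mul]
        have e1 : g w u' = 0 := hu'1
        have e2 : g u w = 0 := by rw [hsymm]; exact hu1
        rw [hsa u u', e2, hu'1]
        ring
      have hCpos : ∀ u ∈ C, u ≠ 0 → 0 < g u u := by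
        intro u hu hu0
        obtain ⟨hu1, hu2⟩ := (hmem u).1 hu
        by_contra hle
        push_neg at hle
        obtain ⟨t, htw⟩ := factM hn hdim g hsymm b hb u w
          (by rw [hsymm]; exact hu1) hle hnull.le hu0
        have : g z w = 0 := by
          rw [htw]
          simp only [map_smul, smul_eq_mul]
          rw [hu2, mul_zero]
        exact hz this
      rcases spectral_dichotomy g hsymm S₀ C hCinv hCsym hCpos μ with
        ⟨x, hxC, hx0, ν, hνμ, hx⟩ | hall
      · -- fix-up trick: eigenvalue ν ≠ μ
        obtain ⟨hx1, hx2⟩ := (hmem x).1 hxC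
        set s : ℝ := k * g z (T x) with hs
        have hTx : T x = ν • x + s • w := by
          have := (hS₀ x).symm.trans hx
          rw [sub_eq_iff_eq_add] at this
          exact this
        set r : ℝ := s / (ν - μ) with hr
        have hrs : s = r * (ν - μ) := (div_mul_cancel₀ s (sub_ne_zero.2 hνμ)).symm
        refine ⟨x + r • w, ν, ?_, ?_, ?_⟩
        · intro h
          have : g z (x + r • w) = 0 := by rw [h]; simp
          simp only [map_add, map_smul, smul_eq_mul, hx2, zero_add] at this
          rcases mul_eq_zero.1 this with h' | h'
          · rw [h', zero_smul, add_zero] at h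
            exact hx0 h
          · exact hz h'
        · rw [map_add, map_smul, hTx, hTw, hrs]
          module
        · have hgxw : g x w = 0 := by rw [hsymm]; exact hx1
          have : g (x + r • w) (x + r • w) = g x x := by
            simp only [map_add, map_smul, LinearMap.add_apply, LinearMap.smul_apply, smul_eq_mul]
            rw [hgxw, hx1, hnull]
            ring
          rw [this]
          exact hCpos x hxC hx0
      · -- S₀ = μ on C : find kernel vector of the extra functional
        set D := C ⊓ LinearMap.ker f with hD
        have hDne : D ≠ ⊥ := by
          have h1 := hker (g w)
          have h2 := hker (g z)
          have h3 := hker f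
          have h4 := hinf (LinearMap.ker (g w)) (LinearMap.ker (g z))
          have h5 := hinf C (LinearMap.ker f)
          intro h
          rw [hD] at h
          rw [h, finrank_bot] at h5
          rw [← hC] at h4
          omega
        obtain ⟨x, hxD, hx0⟩ := Submodule.exists_mem_ne_zero_of_ne_bot hDne
        rw [hD, Submodule.mem_inf] at hxD
        obtain ⟨hxC, hxf⟩ := hxD
        have hfx : g z (T x) = 0 := LinearMap.mem_ker.1 hxf
        have hTx : T x = μ • x := by
          have h1 := hall x hxC
          rw [hS₀, hfx, mul_zero, zero_smul, sub_zero] at h1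
          exact h1
        exact ⟨x, μ, hx0, hTx, hCpos x hxC hx0⟩
    · exact ⟨w, μ, hw0, hTw, hpos⟩
  · -- no eigenvector at all : contradiction
    exfalso
    push_neg at hev
    haveI : Nontrivial V := Module.nontrivial_of_finrank_pos (R := ℝ) (by omega : 0 < finrank ℝ V)
    have hTint : IsIntegral ℝ T := T.isIntegral
    set P : Polynomial ℝ := minpoly ℝ T with hPdef
    have hP0 : P ≠ 0 := minpoly.ne_zero hTint
    have hPdeg : 0 < P.natDegree := minpoly.natDegree_pos hTint
    obtain ⟨p, hpirr, hpdvd⟩ := WfDvdMonoid.exists_irreducible_factor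
      (fun hu => by have := Polynomial.natDegree_eq_zero_of_isUnit hu; omega) hP0
    obtain ⟨q, hq⟩ := hpdvd
    have hp0 : p ≠ 0 := hpirr.ne_zero
    have hq0 : q ≠ 0 := by
      intro h
      rw [h, mul_zero] at hq
      exact hP0 hq
    have hqT : Polynomial.aeval T q ≠ 0 := by
      intro h
      have hdvd2 : P ∣ q := minpoly.dvd ℝ T h
      have h1 : P.natDegree ≤ q.natDegree := Polynomial.natDegree_le_of_dvd hdvd2 hq0
      have h2 : P.natDegree = p.natDegree + q.natDegree := by
        rw [hq, Polynomial.natDegree_mul hp0 hq0]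
      have h3 : 0 < p.natDegree := hpirr.natDegree_pos
      omega
    obtain ⟨w0, hww⟩ : ∃ x, Polynomial.aeval T q x ≠ 0 := by
      by_contra h
      push_neg at h
      exact hqT (LinearMap.ext h)
    set w : V := Polynomial.aeval T q w0 with hwdef
    have hw0 : w ≠ 0 := hww
    have hpw : Polynomial.aeval T p w = 0 := by
      have h1 : Polynomial.aeval T P = 0 := minpoly.aeval ℝ T
      have h2 : Polynomial.aeval T p w = (Polynomial.aeval T p * Polynomial.aeval T q) w0 :=
        rfl
      rw [h2, ← map_mul, ← hq, h1]
      rfl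
    have hdle : p.natDegree < 3 := by
      have := hpirr.natDegree_le_two
      omega
    have happ : p.coeff 0 • w + p.coeff 1 • T w + p.coeff 2 • (T (T w)) = 0 := by
      have hexp := Polynomial.aeval_eq_sum_range' hdle T
      have := congrArg (fun F : V →ₗ[ℝ] V => F w) hexp
      simp only [hpw] at this
      rw [show (3:ℕ) = 2 + 1 from rfl] at this
      simp only [Finset.sum_range_succ, Finset.sum_range_zero, pow_zero, pow_one, pow_two,
        LinearMap.add_apply, LinearMap.smul_apply, Module.End.one_apply, Module.End.mul_apply,
        LinearMap.zero_apply, zero_add] at this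
      exact this.symm
    have hlead : p.coeff p.natDegree ≠ 0 := by
      have := Polynomial.leadingCoeff_ne_zero.2 hp0
      exact this
    have hppos : 0 < p.natDegree := hpirr.natDegree_pos
    by_cases hc2 : p.coeff 2 = 0
    · -- degree one factor : real eigenvector, contradiction
      have hnd2 : p.natDegree ≠ 2 := fun h => hlead (by rw [h]; exact hc2)
      have hnd1 : p.natDegree = 1 := by omega
      have hc1 : p.coeff 1 ≠ 0 := by rw [← hnd1]; exact hlead
      have h3 : p.coeff 1 • T w = (-p.coeff 0) • w := by
        have h := happ
        rw [hc2, zero_smul, add_zero] at h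
        linear_combination (norm := module) h
      have hTweq : T w = ((p.coeff 1)⁻¹ * -p.coeff 0) • w := by
        have h4 := congrArg (fun y => (p.coeff 1)⁻¹ • y) h3
        simp only [smul_smul, inv_mul_cancel₀ hc1, one_smul] at h4
        exact h4
      exact hev w _ hw0 hTweq
    · -- genuine quadratic : 2-dimensional invariant subspace
      set β : ℝ := -(p.coeff 1 / p.coeff 2) with hβ
      set γ : ℝ := -(p.coeff 0 / p.coeff 2) with hγ
      have hT2 : T (T w) = β • T w + γ • w := by
        have h3 : p.coeff 2 • (T (T w)) = (-p.coeff 1) • T w + (-p.coeff 0) • w := by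
          linear_combination (norm := module) happ
        have h4 := congrArg (fun y => (p.coeff 2)⁻¹ • y) h3
        simp only [smul_smul, inv_mul_cancel₀ hc2, one_smul, smul_add] at h4
        rw [h4, hβ, hγ]
        match_scalars <;> ring
      set W : Submodule ℝ V := Submodule.span ℝ ({w, T w} : Set V) with hW
      have hwW : w ∈ W := Submodule.subset_span (by simp)
      have hWinv : ∀ x ∈ W, T x ∈ W := by
        intro x hx
        obtain ⟨a, c, hac⟩ := Submodule.mem_span_pair.1 hx
        refine Submodule.mem_span_pair.2 ⟨c * γ, a + c * β, ?_⟩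
        rw [← hac, map_add, map_smul, map_smul, hT2]
        module
      have horth : ∀ x ∈ W, ∀ r : V, g w r = 0 → g (T w) r = 0 → g x r = 0 := by
        intro x hx r h1 h2
        obtain ⟨a, c, hac⟩ := Submodule.mem_span_pair.1 hx
        rw [← hac]
        simp only [map_add, map_smul, LinearMap.add_apply, LinearMap.smul_apply, smul_eq_mul]
        rw [h1, h2]
        ring
      have rad0 : ∀ r, r ∈ W → r ≠ 0 → g w r = 0 → g (T w) r = 0 → False := by
        intro r hr hr0 h1 h2
        have hrr : g r r = 0 := horth r hr r h1 h2
        have hTr : T r ∈ W := hWinv r hr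
        have h1' : g w (T r) = 0 := by
          calc g w (T r) = g (T r) w := hsymm _ _
            _ = g r (T w) := hsa r w
            _ = g (T w) r := hsymm _ _
            _ = 0 := h2
        have h2' : g (T w) (T r) = 0 := by
          calc g (T w) (T r) = g (T r) (T w) := hsymm _ _
            _ = g r (T (T w)) := hsa r (T w)
            _ = 0 := by
                rw [hT2]
                simp only [map_add, map_smul, smul_eq_mul]
                rw [show g r (T w) = 0 from by rw [hsymm]; exact h2,
                    show g r w = 0 from by rw [hsymm]; exact h1]
                ring
        have hTrTr : g (T r) (T r) = 0 := horth (T r) hTr (T r) h1' h2'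
        have hrTr : g r (T r) = 0 := by
          rw [hsymm]
          exact horth (T r) hTr r h1 h2
        obtain ⟨t, ht⟩ := factM hn hdim g hsymm b hb r (T r) hrTr hrr.le hTrTr.le hr0
        exact hev r t hr0 ht
      by_cases hWpos : ∀ x ∈ W, x ≠ 0 → 0 < g x x
      · rcases spectral_dichotomy g hsymm T W hWinv (fun u _ v _ => hsa u v) hWpos 0 with
          ⟨x, hxW, hx0, ν, _, hx⟩ | hall
        · exact hev x ν hx0 hx
        · exact hev w 0 hw0 (hall w hwW)
      · push_neg at hWpos
        obtain ⟨x₁, hx₁W, hx₁0, hx₁le⟩ := hWpos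
        set W' := LinearMap.ker (g w) ⊓ LinearMap.ker (g (T w)) with hW'
        have hmem' : ∀ u, u ∈ W' ↔ g w u = 0 ∧ g (T w) u = 0 := by
          intro u
          rw [hW', Submodule.mem_inf]
          exact and_congr LinearMap.mem_ker LinearMap.mem_ker
        have hW'inv : ∀ u ∈ W', T u ∈ W' := by
          intro u hu
          obtain ⟨hu1, hu2⟩ := (hmem' u).1 hu
          rw [hmem']
          constructor
          · calc g w (T u) = g (T u) w := hsymm _ _
              _ = g u (T w) := hsa u w
              _ = g (T w) u := hsymm _ _
              _ = 0 := hu2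
          · calc g (T w) (T u) = g (T u) (T w) := hsymm _ _
              _ = g u (T (T w)) := hsa u (T w)
              _ = 0 := by
                  rw [hT2]
                  simp only [map_add, map_smul, smul_eq_mul]
                  rw [show g u (T w) = 0 from by rw [hsymm]; exact hu2,
                      show g u w = 0 from by rw [hsymm]; exact hu1]
                  ring
        have hW'pos : ∀ u ∈ W', u ≠ 0 → 0 < g u u := by
          intro u hu hu0
          obtain ⟨hu1, hu2⟩ := (hmem' u).1 hu
          by_contra hle
          push_neg at hle
          have hux : g u x₁ = 0 := by
            rw [hsymm]
            exact horth x₁ hx₁W u hu1 hu2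
          obtain ⟨t, ht⟩ := factM hn hdim g hsymm b hb u x₁ hux hle hx₁le hu0
          apply rad0 x₁ hx₁W hx₁0
          · rw [ht, map_smul, smul_eq_mul, hu1, mul_zero]
          · rw [ht, map_smul, smul_eq_mul, hu2, mul_zero]
        have hW'ne : W' ≠ ⊥ := by
          have h1 := hker (g w)
          have h2 := hker (g (T w))
          have h3 := hinf (LinearMap.ker (g w)) (LinearMap.ker (g (T w)))
          intro h
          rw [hW'] at h
          rw [h, finrank_bot] at h3
          omega
        rcases spectral_dichotomy g hsymm T W' hW'inv (fun u _ v _ => hsa u v) hW'pos 0 with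
          ⟨x, _, hx0, ν, _, hx⟩ | hall
        · exact hev x ν hx0 hx
        · obtain ⟨x, hxW', hx0⟩ := Submodule.exists_mem_ne_zero_of_ne_bot hW'ne
          exact hev x 0 hx0 (hall x hxW')
end

section
/- Let V be a 5-dimensional real vector space with a symmetric bilinear form g of signature (-,+,+,+,+), and T : V → V a g-self-adjoint operator. Then there exists a 2-dimensional subspace W of V invariant under T on which g is positive definite (a spacelike invariant 2-plane). -/
open Module Polynomial
set_option linter.unusedSectionVars false
set_option maxHeartbeats 1000000
section
variable {V : Type*} [AddCommGroup V] [Module ℝ V] [FiniteDimensional ℝ V]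
variable {g : LinearMap.BilinForm ℝ V} {b : Basis (Fin 5) ℝ V} {T : V →ₗ[ℝ] V}

def Concl (g : LinearMap.BilinForm ℝ V) (T : V →ₗ[ℝ] V) : Prop :=
  ∃ W : Submodule ℝ V, finrank ℝ W = 2 ∧ (∀ w ∈ W, T w ∈ W) ∧
      ∀ w ∈ W, w ≠ 0 → 0 < g w w

theorem qform (hsig : ∀ i j, g (b i) (b j) = if i = j then (if i = 0 then -1 else 1) else 0)
    (v : V) : g v v = ∑ i, (if i = 0 then (-1:ℝ) else 1) * (b.repr v i)^2 := by
  conv_lhs => rw [← b.sum_repr v]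
  simp only [map_sum, LinearMap.sum_apply, map_smul, LinearMap.smul_apply, smul_eq_mul, hsig]
  simp only [mul_ite, mul_one, mul_neg, Finset.sum_ite_eq, Finset.mem_univ, if_true]
  apply Finset.sum_congr rfl
  intro i _
  by_cases h : i = 0 <;> simp [h] <;> ring

-- KL2

theorem span_pair_facts (hsymm : ∀ u v : V, g u v = g v u)
    {e f : V} (he : g e e ≠ 0) (ho : g e f = 0) (hf : f ≠ 0) :
    finrank ℝ ((Submodule.span ℝ {e} ⊔ Submodule.span ℝ {f}) : Submodule ℝ V) = 2 := by
  have hene : e ≠ 0 := by rintro rfl; simp at he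
  have hinf : Submodule.span ℝ {e} ⊓ Submodule.span ℝ {f} = ⊥ := by
    rw [Submodule.eq_bot_iff]
    rintro x ⟨hx1, hx2⟩
    obtain ⟨a, rfl⟩ := Submodule.mem_span_singleton.mp hx1
    obtain ⟨c, hc⟩ := Submodule.mem_span_singleton.mp hx2
    have : g e (a • e) = 0 := by
      rw [← hc, map_smul]
      simp [ho, smul_eq_mul]
    rw [map_smul] at this
    have ha : a = 0 := by
      simp only [smul_eq_mul] at this
      rcases mul_eq_zero.mp this with h | h
      · exact h
      · exact absurd h he
    simp [ha]
  have h1 := Submodule.finrank_sup_add_finrank_inf_eq (Submodule.span ℝ {e}) (Submodule.span ℝ {f})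
  rw [hinf, finrank_span_singleton hene, finrank_span_singleton hf, finrank_bot] at h1
  omega

theorem sa_pow (hsa : ∀ u v : V, g (T u) v = g u (T v)) :
    ∀ (n : ℕ) (u v : V), g ((T^n) u) v = g u ((T^n) v) := by
  intro n
  induction n with
  | zero => simp
  | succ n ih =>
    intro u v
    calc g ((T^(n+1)) u) v = g ((T^n) (T u)) v := by rw [pow_succ]; rfl
    _ = g (T u) ((T^n) v) := ih _ _
    _ = g u (T ((T^n) v)) := hsa _ _
    _ = g u ((T^(n+1)) v) := by rw [pow_succ']; rfl

theorem dim_le_one (hsig : ∀ i j, g (b i) (b j) = if i = j then (if i = 0 then -1 else 1) else 0)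
    (U : Submodule ℝ V) (hU : ∀ v ∈ U, g v v ≤ 0) : finrank ℝ U ≤ 1 := by
  set f : U →ₗ[ℝ] ℝ := (b.coord 0).comp U.subtype with hf
  have hker : LinearMap.ker f = ⊥ := by
    rw [LinearMap.ker_eq_bot']
    intro ⟨v, hv⟩ h0
    have h0' : b.repr v 0 = 0 := by
      simpa [hf, Basis.coord_apply] using congrArg id h0
    have hq : g v v = ∑ i, (b.repr v i)^2 := by
      rw [qform hsig v]
      apply Finset.sum_congr rfl
      intro i _
      by_cases h : i = 0 <;> simp [h, h0']
    have h1 : (0:ℝ) ≤ ∑ i, (b.repr v i)^2 := Finset.sum_nonneg fun i _ => sq_nonneg _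
    have h2 : ∑ i, (b.repr v i)^2 = 0 := le_antisymm (hq ▸ hU v hv) h1
    have h3 : ∀ i, b.repr v i = 0 := by
      intro i
      have := (Finset.sum_eq_zero_iff_of_nonneg (fun i _ => sq_nonneg (b.repr v i))).mp h2 i
        (Finset.mem_univ i)
      exact pow_eq_zero_iff (n := 2) (by norm_num) |>.mp this
    have : v = 0 := by
      apply b.forall_coord_eq_zero_iff.mp
      intro i; simpa [Basis.coord_apply] using h3 i
    exact Subtype.ext this
  have := LinearMap.finrank_range_add_finrank_ker f
  rw [hker, finrank_bot, add_zero] at this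
  rw [← this]
  have := Submodule.finrank_le (LinearMap.range f)
  simpa using this

-- KL1


theorem exists_posdef (hsig : ∀ i j, g (b i) (b j) = if i = j then (if i = 0 then -1 else 1) else 0)
    (U : Submodule ℝ V) : ∃ P : Submodule ℝ V, P ≤ U ∧ finrank ℝ U ≤ finrank ℝ P + 1 ∧
      ∀ v ∈ P, v ≠ 0 → 0 < g v v := by
  set f : U →ₗ[ℝ] ℝ := (b.coord 0).comp U.subtype with hf
  refine ⟨(LinearMap.ker f).map U.subtype, ?_, ?_, ?_⟩
  · exact Submodule.map_subtype_le _ _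
  · rw [Submodule.finrank_map_subtype_eq]
    have := LinearMap.finrank_range_add_finrank_ker f
    have h2 : finrank ℝ (LinearMap.range f) ≤ 1 := by
      have := Submodule.finrank_le (LinearMap.range f); simpa using this
    omega
  · rintro v hv hvne
    obtain ⟨⟨w, hw⟩, hwk, rfl⟩ := hv
    have h0' : b.repr w 0 = 0 := by
      have : f ⟨w, hw⟩ = 0 := hwk
      simpa [hf, Basis.coord_apply] using this
    have hq : g w w = ∑ i, (b.repr w i)^2 := by
      rw [qform hsig w]
      apply Finset.sum_congr rfl
      intro i _
      by_cases h : i = 0 <;> simp [h, h0']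
    simp only [Submodule.coe_subtype] at hvne ⊢
    rw [hq]
    have hwne : w ≠ 0 := hvne
    have hex : ∃ i, b.repr w i ≠ 0 := by
      by_contra h
      push_neg at h
      exact hwne (b.forall_coord_eq_zero_iff.mp (by simpa [Basis.coord_apply] using h))
    obtain ⟨i, hi⟩ := hex
    apply Finset.sum_pos' (fun i _ => sq_nonneg _)
    exact ⟨i, Finset.mem_univ i, by positivity⟩


theorem pair_contra
    (hsig : ∀ i j, g (b i) (b j) = if i = j then (if i = 0 then -1 else 1) else 0)
    (hsymm : ∀ u v : V, g u v = g v u)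
    {v₁ v₂ : V} (h1 : g v₁ v₁ ≤ 0) (h2 : g v₂ v₂ ≤ 0) (ho : g v₁ v₂ = 0)
    (h1n : v₁ ≠ 0) (h2n : v₂ ≠ 0)
    (hind : ∀ a : ℝ, v₁ = a • v₂ → False) : False := by
  set U := Submodule.span ℝ {v₁} ⊔ Submodule.span ℝ {v₂} with hU
  have hneg : ∀ v ∈ U, g v v ≤ 0 := by
    intro v hv
    rw [hU, Submodule.mem_sup] at hv
    obtain ⟨x, hx, y, hy, rfl⟩ := hv
    obtain ⟨a, rfl⟩ := Submodule.mem_span_singleton.mp hx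
    obtain ⟨c, rfl⟩ := Submodule.mem_span_singleton.mp hy
    have expand : g (a • v₁ + c • v₂) (a • v₁ + c • v₂)
        = a^2 * g v₁ v₁ + c^2 * g v₂ v₂ + 2*a*c* g v₁ v₂ := by
      simp only [map_add, map_smul, LinearMap.add_apply, LinearMap.smul_apply, smul_eq_mul]
      rw [hsymm v₂ v₁]
      ring
    rw [expand, ho]
    nlinarith [mul_nonneg (mul_self_nonneg a) (neg_nonneg.mpr h1),
      mul_nonneg (mul_self_nonneg c) (neg_nonneg.mpr h2), sq_nonneg a, sq_nonneg c]
  have hle := dim_le_one hsig U hneg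
  -- but finrank U = 2
  have hinf : Submodule.span ℝ {v₁} ⊓ Submodule.span ℝ {v₂} = ⊥ := by
    rw [Submodule.eq_bot_iff]
    rintro x ⟨hx1, hx2⟩
    obtain ⟨a, rfl⟩ := Submodule.mem_span_singleton.mp hx1
    obtain ⟨c, hc⟩ := Submodule.mem_span_singleton.mp hx2
    by_cases ha : a = 0
    · simp [ha]
    · exfalso
      exact hind (a⁻¹ * c) (by rw [mul_smul, hc, ← mul_smul, inv_mul_cancel₀ ha, one_smul])
  have h1' := Submodule.finrank_sup_add_finrank_inf_eq (Submodule.span ℝ {v₁}) (Submodule.span ℝ {v₂})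
  rw [hinf, finrank_span_singleton h1n, finrank_span_singleton h2n, finrank_bot] at h1'
  rw [← hU] at h1'
  omega


theorem conclude_of_pair (hsymm : ∀ u v : V, g u v = g v u)
    {e f : V} {lam mu : ℝ} (hTe : T e = lam • e) (hTf : T f = mu • f)
    (he : 0 < g e e) (hf : 0 < g f f) (ho : g e f = 0) :
    ∃ W : Submodule ℝ V, finrank ℝ W = 2 ∧ (∀ w ∈ W, T w ∈ W) ∧
      ∀ w ∈ W, w ≠ 0 → 0 < g w w := by
  have hfne : f ≠ 0 := by rintro rfl; simp at hf
  have hene : e ≠ 0 := by rintro rfl; simp at he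
  refine ⟨Submodule.span ℝ {e} ⊔ Submodule.span ℝ {f}, span_pair_facts hsymm he.ne' ho hfne, ?_, ?_⟩
  · intro w hw
    rw [Submodule.mem_sup] at hw ⊢
    obtain ⟨x, hx, y, hy, rfl⟩ := hw
    obtain ⟨a, rfl⟩ := Submodule.mem_span_singleton.mp hx
    obtain ⟨c, rfl⟩ := Submodule.mem_span_singleton.mp hy
    refine ⟨(a*lam) • e, Submodule.mem_span_singleton.mpr ⟨_, rfl⟩,
            (c*mu) • f, Submodule.mem_span_singleton.mpr ⟨_, rfl⟩, ?_⟩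
    rw [map_add, map_smul, map_smul, hTe, hTf, ← mul_smul, ← mul_smul]
  · intro w hw hwne
    rw [Submodule.mem_sup] at hw
    obtain ⟨x, hx, y, hy, rfl⟩ := hw
    obtain ⟨a, rfl⟩ := Submodule.mem_span_singleton.mp hx
    obtain ⟨c, rfl⟩ := Submodule.mem_span_singleton.mp hy
    have expand : g (a • e + c • f) (a • e + c • f)
        = a^2 * g e e + c^2 * g f f + 2*a*c* g e f := by
      simp only [map_add, map_smul, LinearMap.add_apply, LinearMap.smul_apply, smul_eq_mul]
      rw [hsymm f e]
      ring
    rw [expand, ho]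
    have hac : a ≠ 0 ∨ c ≠ 0 := by
      by_contra hcon
      push_neg at hcon
      exact hwne (by simp [hcon.1, hcon.2])
    rcases hac with h | h
    · have ha2 : 0 < a^2 := by positivity
      nlinarith [sq_nonneg c, mul_pos ha2 he, mul_nonneg (sq_nonneg c) hf.le]
    · have hc2 : 0 < c^2 := by positivity
      nlinarith [sq_nonneg a, mul_pos hc2 hf, mul_nonneg (sq_nonneg a) he.le]


theorem sa_aeval (hsa : ∀ u v : V, g (T u) v = g u (T v)) (P : ℝ[X]) (u v : V) :
    g ((aeval T P) u) v = g u ((aeval T P) v) := by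
  rw [aeval_eq_sum_range]
  simp only [LinearMap.coe_sum, Finset.sum_apply, LinearMap.smul_apply, map_sum, map_smul,
    LinearMap.sum_apply, smul_eq_mul]
  apply Finset.sum_congr rfl
  intro i _
  rw [sa_pow hsa i u v]


-- move powers across the form
theorem hmove (hsa : ∀ u v : V, g (T u) v = g u (T v)) (p : ℝ[X]) (a c : ℕ) (u v : V) :
    g (((aeval T p) ^ a) u) (((aeval T p) ^ c) v) = g u (((aeval T p) ^ (a+c)) v) := by
  rw [← map_pow, ← map_pow, sa_aeval hsa]
  congr 1
  rw [← Module.End.mul_apply, ← map_mul, ← pow_add, map_pow]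

theorem ker_pow_mono (N : Module.End ℝ V) {i j : ℕ} (hij : i ≤ j) :
    LinearMap.ker (N ^ i) ≤ LinearMap.ker (N ^ j) := by
  obtain ⟨t, rfl⟩ := Nat.exists_eq_add_of_le hij
  intro u hu
  rw [LinearMap.mem_ker] at hu ⊢
  rw [add_comm, pow_add, Module.End.mul_apply, hu, map_zero]

theorem step_bound
    (hsig : ∀ i j, g (b i) (b j) = if i = j then (if i = 0 then -1 else 1) else 0)
    (hsa : ∀ u v : V, g (T u) v = g u (T v)) (p : ℝ[X]) {j : ℕ} (hj : 1 ≤ j) :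
    finrank ℝ (LinearMap.ker ((aeval T p) ^ (j+1)))
      ≤ finrank ℝ (LinearMap.ker ((aeval T p) ^ j)) + 1 := by
  set N := aeval T p with hN
  set K := LinearMap.ker (N ^ (j+1)) with hK
  set f : K →ₗ[ℝ] V := (N ^ j).comp K.subtype with hf
  have hrank := LinearMap.finrank_range_add_finrank_ker f
  have hkerf : finrank ℝ (LinearMap.ker f) ≤ finrank ℝ (LinearMap.ker (N ^ j)) := by
    have hle : LinearMap.ker (N ^ j) ≤ K := ker_pow_mono N (by omega)
    have : LinearMap.ker f = Submodule.comap K.subtype (LinearMap.ker (N ^ j)) := by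
      rw [hf, LinearMap.ker_comp]
    rw [this]
    exact le_of_eq (LinearEquiv.finrank_eq (Submodule.comapSubtypeEquivOfLe hle))
  have hrangef : finrank ℝ (LinearMap.range f) ≤ 1 := by
    apply dim_le_one hsig
    rintro v ⟨⟨u, hu⟩, rfl⟩
    have hu' : (N ^ (j+1)) u = 0 := hu
    have : g ((N ^ j) u) ((N ^ j) u) = g u ((N ^ (j+j)) u) := hmove hsa p j j u u
    have hz : (N ^ (j+j)) u = 0 := by
      have : (N ^ (j + j)) u = (N ^ (j-1)) ((N ^ (j+1)) u) := by
        rw [← Module.End.mul_apply, ← pow_add]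
        congr 2
        omega
      rw [this, hu', map_zero]
    simp only [hf, LinearMap.comp_apply, Submodule.coe_subtype]
    rw [‹g ((N ^ j) u) ((N ^ j) u) = _›, hz, map_zero]
  have : finrank ℝ K = finrank ℝ (LinearMap.range f) + finrank ℝ (LinearMap.ker f) := hrank.symm
  omega

-- stabilization: for m ≥ 3, ker N^(m+1) = ker N^m  (N = aeval T p)
theorem stab3
    (hsig : ∀ i j, g (b i) (b j) = if i = j then (if i = 0 then -1 else 1) else 0)
    (hsymm : ∀ u v : V, g u v = g v u)
    (hsa : ∀ u v : V, g (T u) v = g u (T v)) (p : ℝ[X]) (jj : ℕ) :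
    LinearMap.ker ((aeval T p) ^ (jj+4)) ≤ LinearMap.ker ((aeval T p) ^ (jj+3)) := by
  set N := aeval T p with hN
  intro u hu
  rw [LinearMap.mem_ker] at hu ⊢
  by_contra hy
  set x := (N ^ (jj+2)) u with hx
  set y := (N ^ (jj+3)) u with hyy
  have hkill : ∀ t : ℕ, jj + 4 ≤ t → (N ^ t) u = 0 := by
    intro t ht
    obtain ⟨r, rfl⟩ := Nat.exists_eq_add_of_le ht
    rw [add_comm, pow_add, Module.End.mul_apply, hu, map_zero]
  have hqx : g x x = 0 := by
    rw [hx, hmove hsa p _ _ u u, hkill _ (by omega), map_zero]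
  have hqy : g y y = 0 := by
    rw [hyy, hmove hsa p _ _ u u, hkill _ (by omega), map_zero]
  have hxy : g x y = 0 := by
    rw [hx, hyy, hmove hsa p _ _ u u, hkill _ (by omega), map_zero]
  have hxne : x ≠ 0 := by
    intro h0
    apply hy
    rw [hyy, show jj + 3 = (jj+2) + 1 by omega, pow_succ', Module.End.mul_apply, ← hx, h0, map_zero]
  have hNx : N x = y := by
    rw [hx, hyy, ← Module.End.mul_apply, ← pow_succ']
  have hNy : N y = 0 := by
    rw [hyy, ← Module.End.mul_apply, ← pow_succ', hkill _ (by omega)]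
  exact pair_contra hsig hsymm (le_of_eq hqx) (le_of_eq hqy) hxy hxne hy
    (fun a ha => by
      apply hy
      have := congrArg (fun w => N w) ha
      simp only [map_smul, hNx, hNy, smul_zero] at this
      exact this)

theorem ker_le_ker3
    (hsig : ∀ i j, g (b i) (b j) = if i = j then (if i = 0 then -1 else 1) else 0)
    (hsymm : ∀ u v : V, g u v = g v u)
    (hsa : ∀ u v : V, g (T u) v = g u (T v)) (p : ℝ[X]) (m : ℕ) :
    LinearMap.ker ((aeval T p) ^ m) ≤ LinearMap.ker ((aeval T p) ^ 3) := by
  induction m with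
  | zero => exact ker_pow_mono _ (by omega)
  | succ m ih =>
    by_cases hm : m + 1 ≤ 3
    · exact ker_pow_mono _ hm
    · have h3 : ∃ jj, m = jj + 3 := ⟨m - 3, by omega⟩
      obtain ⟨jj, rfl⟩ := h3
      exact le_trans (stab3 hsig hsymm hsa p jj) ih

-- generic stabilization from level 1 or 2
theorem ker_stab_of_step (N : Module.End ℝ V) {k : ℕ}
    (hstep : LinearMap.ker (N ^ (k+1)) ≤ LinearMap.ker (N ^ k)) (m : ℕ) :
    LinearMap.ker (N ^ m) ≤ LinearMap.ker (N ^ k) := by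
  induction m with
  | zero => exact ker_pow_mono _ (by omega)
  | succ m ih =>
    by_cases hm : m + 1 ≤ k
    · exact ker_pow_mono _ hm
    · intro u hu
      rw [LinearMap.mem_ker] at hu
      have h1 : N u ∈ LinearMap.ker (N ^ m) := by
        rw [LinearMap.mem_ker, ← Module.End.mul_apply, ← pow_succ]
        exact hu
      have h2 : N u ∈ LinearMap.ker (N ^ k) := ih h1
      apply hstep
      rw [LinearMap.mem_ker, pow_succ, Module.End.mul_apply]
      exact h2

def SPsp (g : LinearMap.BilinForm ℝ V) (T : V →ₗ[ℝ] V) (U : Submodule ℝ V) : Prop :=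
  ∃ (v : V) (lam : ℝ), v ∈ U ∧ T v = lam • v ∧ 0 < g v v

def ZVn (g : LinearMap.BilinForm ℝ V) (U : Submodule ℝ V) : Prop :=
  ∃ v : V, v ∈ U ∧ v ≠ 0 ∧ g v v ≤ 0

def KBound (g : LinearMap.BilinForm ℝ V) (T : V →ₗ[ℝ] V) (U : Submodule ℝ V) : Prop :=
  ∃ s z : ℕ, s ≤ 1 ∧ z ≤ 1 ∧ (0 < s → SPsp g T U) ∧ (0 < z → ZVn g U) ∧
    finrank ℝ U ≤ s + 3*z

theorem concl_of_posdef_pair (hsymm : ∀ u v : V, g u v = g v u)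
    {P : Submodule ℝ V} {lam : ℝ} (hP2 : 2 ≤ finrank ℝ P)
    (hPpos : ∀ v ∈ P, v ≠ 0 → 0 < g v v)
    (hPeig : ∀ v ∈ P, T v = lam • v) : Concl g T := by
  have hPne : P ≠ ⊥ := by
    intro h
    rw [h, finrank_bot] at hP2
    omega
  obtain ⟨e, heP, hene⟩ := Submodule.exists_mem_ne_zero_of_ne_bot hPne
  have hfP : ∃ f ∈ P, f ∉ Submodule.span ℝ {e} := by
    by_contra hcon
    push_neg at hcon
    have : P ≤ Submodule.span ℝ {e} := hcon
    have := Submodule.finrank_mono this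
    rw [finrank_span_singleton hene] at this
    omega
  obtain ⟨f, hfPmem, hfns⟩ := hfP
  have hee : 0 < g e e := hPpos e heP hene
  set f' := f - ((g e f)/(g e e)) • e with hf'
  have hf'P : f' ∈ P := P.sub_mem hfPmem (P.smul_mem _ heP)
  have hf'ne : f' ≠ 0 := by
    intro h0
    apply hfns
    rw [Submodule.mem_span_singleton]
    refine ⟨(g e f)/(g e e), ?_⟩
    have : f - ((g e f)/(g e e)) • e = 0 := h0
    rw [sub_eq_zero] at this
    exact this.symm
  have horth : g e f' = 0 := by
    rw [hf', map_sub, map_smul]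
    simp only [smul_eq_mul]
    field_simp
    ring
  exact conclude_of_pair hsymm (hPeig e heP) (hPeig f' hf'P) hee (hPpos f' hf'P hf'ne) horth

theorem base_linear
    (hsig : ∀ i j, g (b i) (b j) = if i = j then (if i = 0 then -1 else 1) else 0)
    (hsymm : ∀ u v : V, g u v = g v u)
    (hsa : ∀ u v : V, g (T u) v = g u (T v))
    (hcon : ¬ Concl g T) (lam : ℝ) (k : ℕ) (hk : 1 ≤ k) :
    KBound g T (LinearMap.ker ((aeval T (X - C lam)) ^ k)) := by
  set N := aeval T (X - C lam) with hN
  have hNapp : ∀ v : V, N v = T v - lam • v := by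
    intro v
    rw [hN]
    simp [map_sub, aeval_X, aeval_C, Module.algebraMap_end_apply]
  have heig : ∀ v : V, v ∈ LinearMap.ker N ↔ T v = lam • v := by
    intro v
    rw [LinearMap.mem_ker, hNapp, sub_eq_zero]
  set E := LinearMap.ker N with hE
  have hEk : E ≤ LinearMap.ker (N ^ k) := by
    have : E = LinearMap.ker (N ^ 1) := by rw [pow_one]
    rw [this]
    exact ker_pow_mono N hk
  -- finrank ℝ E ≤ 2
  have hd2 : finrank ℝ E ≤ 2 := by
    by_contra hd3
    push_neg at hd3
    obtain ⟨P, hPE, hPd, hPpos⟩ := exists_posdef hsig E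
    apply hcon
    refine concl_of_posdef_pair hsymm (P := P) (lam := lam) (by omega) hPpos ?_
    intro v hv
    exact (heig v).mp (hPE hv)
  -- main chain bound
  have hchain : finrank ℝ (LinearMap.ker (N ^ k)) ≤ finrank ℝ E + 2 := by
    have h3 := Submodule.finrank_mono (ker_le_ker3 hsig hsymm hsa (X - C lam) k)
    have h32 := step_bound hsig hsa (X - C lam) (j := 2) (by omega)
    have h21 := step_bound hsig hsa (X - C lam) (j := 1) (by omega)
    rw [← hN, show (2:ℕ)+1 = 3 from rfl] at h32
    rw [← hN, show (1:ℕ)+1 = 2 from rfl, pow_one, ← hE] at h21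
    rw [← hN] at h3
    omega
  rcases Nat.lt_or_ge (finrank ℝ E) 1 with hd0 | hd1
  · -- d = 0 : everything trivial
    have hE0 : E = ⊥ := by
      exact Submodule.finrank_eq_zero.mp (by omega)
    have hker0 : ∀ m : ℕ, LinearMap.ker (N ^ m) = ⊥ := by
      intro m
      induction m with
      | zero => rw [pow_zero, Module.End.one_eq_id, LinearMap.ker_id]
      | succ m ih =>
        rw [Submodule.eq_bot_iff]
        intro u hu
        rw [LinearMap.mem_ker, pow_succ, Module.End.mul_apply] at hu
        have h1 : N u ∈ LinearMap.ker (N ^ m) := by rw [LinearMap.mem_ker]; exact hu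
        rw [ih, Submodule.mem_bot] at h1
        have h2 : u ∈ E := by rw [hE, LinearMap.mem_ker]; exact h1
        rw [hE0, Submodule.mem_bot] at h2
        exact h2
    refine ⟨0, 0, by omega, by omega, fun h => absurd h (by omega),
      fun h => absurd h (by omega), ?_⟩
    have : finrank ℝ (LinearMap.ker (N ^ k)) = 0 := by
      rw [hker0 k]; exact finrank_bot ℝ V
    omega
  · -- d ≥ 1 : pick nonzero e ∈ E
    have hEne : E ≠ ⊥ := by
      intro h
      rw [h, finrank_bot] at hd1
      omega
    obtain ⟨e, heE, hene⟩ := Submodule.exists_mem_ne_zero_of_ne_bot hEne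
    rcases Nat.lt_or_ge (finrank ℝ E) 2 with hdd | hdd
    · -- d = 1
      have hspan : E = Submodule.span ℝ {e} := by
        apply (Submodule.eq_of_le_of_finrank_le ?_ ?_).symm
        · rwa [Submodule.span_singleton_le_iff_mem]
        · rw [finrank_span_singleton hene]
          omega
      rcases le_or_gt (g e e) 0 with hq | hq
      · -- q e ≤ 0 : z = 1
        refine ⟨0, 1, by omega, by omega, fun h => absurd h (by omega),
          fun _ => ⟨e, hEk heE, hene, hq⟩, ?_⟩
        omega
      · -- q e > 0 : s = 1
        have hstep1 : LinearMap.ker (N ^ (1+1)) ≤ LinearMap.ker (N ^ 1) := by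
          intro u hu
          rw [LinearMap.mem_ker] at hu ⊢
          rw [pow_one]
          have hNuE : N u ∈ E := by
            rw [hE, LinearMap.mem_ker]
            have h2 : (N ^ (1+1)) u = N (N u) := by
              rw [show (1:ℕ)+1 = 2 from rfl, pow_two]; rfl
            rw [← h2]
            exact hu
          rw [hspan] at hNuE
          obtain ⟨c, hc⟩ := Submodule.mem_span_singleton.mp hNuE
          have hq0 : g (N u) (N u) = 0 := by
            have hm := hmove hsa (X - C lam) 1 1 u u
            rw [← hN] at hm
            simp only [pow_one] at hm
            rw [hm]
            have h2 : (N ^ (1+1)) u = 0 := hu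
            rw [show (1:ℕ)+1 = 2 from rfl] at h2
            rw [h2, map_zero]
          have hc2 : c * (c * g e e) = 0 := by
            have hq1 : g (c • e) (c • e) = 0 := by rw [hc]; exact hq0
            simp only [map_smul, LinearMap.smul_apply, smul_eq_mul] at hq1
            exact hq1
          have hc0 : c = 0 := by
            rcases mul_eq_zero.mp hc2 with h | h
            · exact h
            · rcases mul_eq_zero.mp h with h' | h'
              · exact h'
              · exact absurd h' hq.ne'
          rw [← hc, hc0, zero_smul]
        have hle1 : LinearMap.ker (N ^ k) ≤ E := by
          have := ker_stab_of_step N (k := 1) hstep1 k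
          rwa [pow_one] at this
        refine ⟨1, 0, by omega, by omega,
          fun _ => ⟨e, lam, hEk heE, (heig e).mp heE, hq⟩,
          fun h => absurd h (by omega), ?_⟩
        have := Submodule.finrank_mono hle1
        omega
    · -- d = 2
      have hz : ZVn g (LinearMap.ker (N ^ k)) := by
        by_cases hzz : ∃ w ∈ E, w ≠ 0 ∧ g w w ≤ 0
        · obtain ⟨w, hwE, hwne, hwq⟩ := hzz
          exact ⟨w, hEk hwE, hwne, hwq⟩
        · exfalso
          push_neg at hzz
          apply hcon
          refine ⟨E, ?_, ?_, ?_⟩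
          · omega
          · intro w hw
            rw [(heig w).mp hw]
            exact E.smul_mem _ hw
          · intro w hw hwne
            by_contra hq
            push_neg at hq
            exact absurd hq (not_le.mpr (hzz w hw hwne))
      have hs : SPsp g T (LinearMap.ker (N ^ k)) := by
        by_cases hss : ∃ w ∈ E, 0 < g w w
        · obtain ⟨w, hwE, hwq⟩ := hss
          exact ⟨w, lam, hEk hwE, (heig w).mp hwE, hwq⟩
        · exfalso
          push_neg at hss
          have := dim_le_one hsig E hss
          omega
      exact ⟨1, 1, by omega, by omega, fun _ => hs, fun _ => hz, by omega⟩

theorem quad_decomp {p : ℝ[X]} (hpm : p.Monic) (hdeg : p.natDegree = 2) :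
    p = X^2 + C (p.coeff 1) * X + C (p.coeff 0) := by
  have hp2 : p.coeff 2 = 1 := by
    have := hpm.coeff_natDegree
    rwa [hdeg] at this
  ext n
  rcases n with _ | _ | _ | n
  · simp [coeff_C]
  · simp [coeff_C]
  · simp [coeff_C, coeff_X_pow, hp2]
  · have h1 : p.coeff (n+3) = 0 := by
      apply coeff_eq_zero_of_natDegree_lt
      omega
    rw [h1]
    simp [coeff_C, coeff_X_pow]

theorem base_quad
    (hsig : ∀ i j, g (b i) (b j) = if i = j then (if i = 0 then -1 else 1) else 0)
    (hsymm : ∀ u v : V, g u v = g v u)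
    (hsa : ∀ u v : V, g (T u) v = g u (T v))
    {p : ℝ[X]} (hpm : p.Monic) (hpirr : Irreducible p) (hdeg : p.natDegree = 2)
    (k : ℕ) (hk : 1 ≤ k) :
    KBound g T (LinearMap.ker ((aeval T p) ^ k)) := by
  have hp3 := quad_decomp hpm hdeg
  set c1 := p.coeff 1 with hc1
  set c0 := p.coeff 0 with hc0
  obtain ⟨a, ee, hc1a, hc0a⟩ : ∃ a ee : ℝ, c1 = -(2*a) ∧ c0 = a^2 + ee :=
    ⟨-c1/2, c0 - (-c1/2)^2, by ring, by ring⟩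
  -- ee > 0 since p has no real root
  have hee : 0 < ee := by
    by_contra hcc
    push_neg at hcc
    set r := a + Real.sqrt (-ee) with hr
    have hroot : p.IsRoot r := by
      rw [IsRoot, hp3]
      simp only [eval_add, eval_pow, eval_mul, eval_X, eval_C]
      have hs : Real.sqrt (-ee) ^ 2 = -ee := Real.sq_sqrt (by linarith)
      rw [hc1a, hc0a, hr]
      nlinarith [hs]
    obtain ⟨q, hq⟩ := dvd_iff_isRoot.mpr hroot
    have hqne : q ≠ 0 := by
      intro h
      rw [h, mul_zero] at hq
      exact hpm.ne_zero hq
    have hXne : (X - C r : ℝ[X]) ≠ 0 := X_sub_C_ne_zero r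
    have hdq : q.natDegree = 1 := by
      have := natDegree_mul hXne hqne
      rw [← hq, hdeg, natDegree_X_sub_C] at this
      omega
    rcases hpirr.isUnit_or_isUnit hq with h | h
    · exact (not_isUnit_X_sub_C r) h
    · have := natDegree_eq_zero_of_isUnit h
      omega
  set S := aeval T (X - C a) with hS
  set M := aeval T p with hM
  have hSapp : ∀ v : V, S v = T v - a • v := by
    intro v
    rw [hS]
    simp [map_sub, aeval_X, aeval_C, Module.algebraMap_end_apply]
  have hrel : ∀ v : V, M v = S (S v) + ee • v := by
    intro v
    rw [hM, hp3]
    simp only [map_add, map_pow, map_mul, aeval_X, aeval_C, LinearMap.add_apply,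
      Module.End.mul_apply, Module.End.pow_apply, Module.algebraMap_end_apply]
    rw [hSapp, hSapp, hc1a, hc0a]
    simp only [pow_two, Function.iterate_succ, Function.iterate_zero, Function.comp_apply, id]
    rw [map_sub, map_smul]
    module
  have hcomm : ∀ v : V, M (S v) = S (M v) := by
    intro v
    rw [hM, hS, ← Module.End.mul_apply, ← map_mul, mul_comm, map_mul, Module.End.mul_apply]
  have hSK : ∀ v ∈ LinearMap.ker M, S v ∈ LinearMap.ker M := by
    intro v hv
    rw [LinearMap.mem_ker] at hv ⊢
    rw [hcomm, hv, map_zero]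
  have hS2 : ∀ v ∈ LinearMap.ker M, S (S v) = -(ee • v) := by
    intro v hv
    rw [LinearMap.mem_ker] at hv
    have h1 := hrel v
    rw [hv] at h1
    linear_combination (norm := module) -h1
  -- stabilization : ker M^(j+1) ≤ ker M^j  for j ≥ 1
  have hstab : ∀ j : ℕ, 1 ≤ j → LinearMap.ker (M ^ (j+1)) ≤ LinearMap.ker (M ^ j) := by
    intro j hj u hu
    obtain ⟨i, rfl⟩ : ∃ i, j = i + 1 := ⟨j - 1, by omega⟩
    rw [LinearMap.mem_ker] at hu ⊢
    by_contra hx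
    set x := (M ^ (i+1)) u with hxd
    have hMx : M x = 0 := by
      rw [hxd, ← Module.End.mul_apply, ← pow_succ']
      exact hu
    have hkill : ∀ P : ℝ[X], (p^(i+2)) ∣ P → (aeval T P) u = 0 := by
      intro P hP
      obtain ⟨Q, rfl⟩ := hP
      rw [mul_comm, map_mul, Module.End.mul_apply]
      rw [show ((aeval T) (p ^ (i+2))) u = 0 from by
        rw [map_pow, ← hM, show i+2 = (i+1)+1 from rfl]; exact hu]
      rw [map_zero]
    have hx_ae : x = (aeval T (p^(i+1))) u := by rw [hxd, map_pow, hM]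
    have hSx_ae : S x = (aeval T ((X - C a) * p^(i+1))) u := by
      rw [map_mul, Module.End.mul_apply, ← hx_ae, hS]
    have pair : ∀ P1 P2 : ℝ[X],
        g ((aeval T P1) u) ((aeval T P2) u) = g u ((aeval T (P1 * P2)) u) := by
      intro P1 P2
      rw [sa_aeval hsa, map_mul, Module.End.mul_apply]
    have hqx : g x x = 0 := by
      rw [hx_ae, pair, hkill _ ⟨p^i, by ring⟩, map_zero]
    have hqSx : g (S x) (S x) = 0 := by
      rw [hSx_ae, pair, hkill _ ⟨(X - C a)^2 * p^i, by ring⟩, map_zero]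
    have hxSx : g x (S x) = 0 := by
      rw [hSx_ae, hx_ae, pair, hkill _ ⟨(X - C a) * p^i, by ring⟩, map_zero]
    have hxK : x ∈ LinearMap.ker M := LinearMap.mem_ker.mpr hMx
    have hSxne : S x ≠ 0 := by
      intro h0
      have h1 := hS2 x hxK
      rw [h0, map_zero] at h1
      have h2 : ee • x = 0 := by linear_combination (norm := module) h1
      rcases smul_eq_zero.mp h2 with h | h
      · exact absurd h hee.ne'
      · exact hx h
    exact pair_contra hsig hsymm (le_of_eq hqx) (le_of_eq hqSx) hxSx hx hSxne
      (fun al hal => by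
        have h1 : S x = al • S (S x) := by rw [← map_smul, ← hal]
        rw [hS2 x hxK] at h1
        have h3 : x = (-(al^2 * ee)) • x := by
          nth_rewrite 1 [hal, h1]
          module
        have h4 : (1 + al^2*ee) • x = 0 := by
          rw [add_smul, one_smul]
          nth_rewrite 1 [h3]
          module
        have h5 : (1 + al^2*ee) ≠ 0 := by positivity
        rcases smul_eq_zero.mp h4 with h | h
        · exact h5 h
        · exact hx h)
  -- all kernels collapse to ker M
  have hcollapse : ∀ j : ℕ, 1 ≤ j → LinearMap.ker (M ^ j) ≤ LinearMap.ker M := by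
    intro j
    induction j with
    | zero => omega
    | succ j ih =>
      intro _
      by_cases hj : 1 ≤ j
      · exact le_trans (hstab j hj) (ih hj)
      · have : j = 0 := by omega
        subst this
        rw [pow_one]
  -- dim (ker M) ≤ 2
  have hdim : finrank ℝ (LinearMap.ker M) ≤ 2 := by
    obtain ⟨P, hPK, hPd, hPpos⟩ := exists_posdef hsig (LinearMap.ker M)
    set f : P →ₗ[ℝ] V := S.comp P.subtype with hf
    have hkerf : LinearMap.ker f = ⊥ := by
      rw [LinearMap.ker_eq_bot']
      intro ⟨v, hv⟩ h0
      have hSv : S v = 0 := h0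
      have h1 := hS2 v (hPK hv)
      rw [hSv, map_zero] at h1
      have h2 : ee • v = 0 := by linear_combination (norm := module) h1
      rcases smul_eq_zero.mp h2 with h | h
      · exact absurd h hee.ne'
      · exact Subtype.ext h
    have hrange : finrank ℝ (LinearMap.range f) ≤ 1 := by
      apply dim_le_one hsig
      rintro w ⟨⟨v, hv⟩, rfl⟩
      have h1 : g (S v) (S v) = g v (S (S v)) := by
        rw [hS, sa_aeval hsa]
      rw [hS2 v (hPK hv)] at h1
      have h2 : g v (-(ee • v)) = -(ee * g v v) := by
        rw [map_neg, map_smul]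
        simp [smul_eq_mul]
      have h3 : 0 ≤ g v v := by
        rcases eq_or_ne v 0 with h | h
        · rw [h]; simp
        · exact (hPpos v hv h).le
      simp only [hf, LinearMap.comp_apply, Submodule.coe_subtype]
      rw [h1, h2]
      nlinarith [mul_nonneg hee.le h3]
    have hrank := LinearMap.finrank_range_add_finrank_ker f
    rw [hkerf, finrank_bot, add_zero] at hrank
    omega
  -- conclude
  have hKk : LinearMap.ker (M ^ k) ≤ LinearMap.ker M := hcollapse k hk
  have hdimk : finrank ℝ (LinearMap.ker (M ^ k)) ≤ 2 :=
    le_trans (Submodule.finrank_mono hKk) hdim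
  by_cases hKbot : LinearMap.ker M = ⊥
  · refine ⟨0, 0, by omega, by omega, fun h => absurd h (by omega),
      fun h => absurd h (by omega), ?_⟩
    have : LinearMap.ker (M ^ k) = ⊥ := le_bot_iff.mp (hKbot ▸ hKk)
    rw [this]
    have : finrank ℝ (⊥ : Submodule ℝ V) = 0 := finrank_bot ℝ V
    omega
  · -- produce an isotropic vector in ker M
    obtain ⟨u, huK, hune⟩ := Submodule.exists_mem_ne_zero_of_ne_bot hKbot
    have hzv : ZVn g (LinearMap.ker (M ^ k)) := by
      rcases le_or_gt (g u u) 0 with hqu | hqu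
      · exact ⟨u, ker_pow_mono M hk (by rwa [pow_one]), hune, hqu⟩
      · -- construct isotropic combination
        set A := g u u with hA
        set B := g u (S u) with hB
        have hApos : 0 < A := hqu
        obtain ⟨al, hal⟩ : ∃ al : ℝ, al * A = -B + Real.sqrt (B^2 + ee*A^2) :=
          ⟨(-B + Real.sqrt (B^2 + ee*A^2))/A, by field_simp⟩
        set w := al • u + S u with hw
        have hwK : w ∈ LinearMap.ker M := by
          apply Submodule.add_mem
          · exact Submodule.smul_mem _ _ huK
          · exact hSK u huK
        have hqSu : g (S u) (S u) = -(ee * A) := by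
          have h1 : g (S u) (S u) = g u (S (S u)) := by rw [hS, sa_aeval hsa]
          rw [hS2 u huK] at h1
          rw [h1, map_neg, map_smul]
          simp [smul_eq_mul, hA]
        have hsq : Real.sqrt (B^2 + ee*A^2) ^ 2 = B^2 + ee*A^2 := by
          apply Real.sq_sqrt
          nlinarith [sq_nonneg B, sq_nonneg A]
        have hqw : g w w = 0 := by
          have hexp : g w w = al^2 * A + 2*al*B + g (S u) (S u) := by
            rw [hw]
            simp only [map_add, map_smul, LinearMap.add_apply, LinearMap.smul_apply, smul_eq_mul]
            rw [hsymm (S u) u]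
            rw [← hA, ← hB]
            ring
          have h2 : (al*A)^2 = (-B + Real.sqrt (B^2 + ee*A^2))^2 := by rw [hal]
          have key : A * (al^2 * A + 2*al*B - ee*A) = 0 := by
            linear_combination h2 + 2*B*hal + hsq
          rw [hexp, hqSu]
          rcases mul_eq_zero.mp key with h | h
          · exact absurd h hApos.ne'
          · linarith [h]
        have hwne : w ≠ 0 := by
          intro h0
          have hSu : S u = -(al • u) := by
            rw [hw] at h0
            linear_combination (norm := module) h0
          have h1 : S (S u) = -(ee • u) := hS2 u huK
          rw [hSu, map_neg, map_smul, hSu] at h1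
          have h2 : (al^2 + ee) • u = 0 := by
            rw [add_smul]
            linear_combination (norm := module) h1
          have h3 : al^2 + ee ≠ 0 := by positivity
          rcases smul_eq_zero.mp h2 with h | h
          · exact h3 h
          · exact hune h
        exact ⟨w, ker_pow_mono M hk (by rwa [pow_one]), hwne, le_of_eq hqw⟩
    exact ⟨0, 1, by omega, by omega, fun h => absurd h (by omega), fun _ => hzv, by omega⟩

theorem eigen_orth (hsa : ∀ u v : V, g (T u) v = g u (T v))
    {e f : V} {lam mu : ℝ} (hTe : T e = lam • e) (hTf : T f = mu • f) (hne : lam ≠ mu) :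
    g e f = 0 := by
  have h1 : lam * g e f = mu * g e f := by
    have := hsa e f
    rw [hTe, hTf, map_smul] at this
    simpa [smul_eq_mul] using this
  have h2 : (lam - mu) * g e f = 0 := by ring_nf; linarith [h1]
  rcases mul_eq_zero.mp h2 with h | h
  · exact absurd (by linarith : lam = mu) hne
  · exact h


theorem split_ker (hsa : ∀ u v : V, g (T u) v = g u (T v)) {P Q : ℝ[X]} (h : IsCoprime P Q) :
    (LinearMap.ker (aeval T P) ⊓ LinearMap.ker (aeval T Q) = ⊥) ∧
    (LinearMap.ker (aeval T (P*Q)) = LinearMap.ker (aeval T P) ⊔ LinearMap.ker (aeval T Q)) ∧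
    (∀ u ∈ LinearMap.ker (aeval T P), ∀ v ∈ LinearMap.ker (aeval T Q), g u v = 0) ∧
    (finrank ℝ (LinearMap.ker (aeval T (P*Q))) =
      finrank ℝ (LinearMap.ker (aeval T P)) + finrank ℝ (LinearMap.ker (aeval T Q))) := by
  obtain ⟨a, c, hac⟩ := h
  have key : ∀ v : V, (aeval T (a*P)) v + (aeval T (c*Q)) v = v := by
    intro v
    have : aeval T (a*P + c*Q) = LinearMap.id (R := ℝ) (M := V) := by
      rw [hac]; simp [Polynomial.aeval_one]; rfl
    have h2 := LinearMap.congr_fun this v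
    simpa [map_add] using h2
  have hPQ : ∀ v ∈ LinearMap.ker (aeval T P), v ∈ LinearMap.ker (aeval T (P*Q)) := by
    intro v hv
    rw [LinearMap.mem_ker] at hv ⊢
    rw [mul_comm, map_mul, Module.End.mul_apply, hv, map_zero]
  have hQP : ∀ v ∈ LinearMap.ker (aeval T Q), v ∈ LinearMap.ker (aeval T (P*Q)) := by
    intro v hv
    rw [LinearMap.mem_ker] at hv ⊢
    rw [map_mul, Module.End.mul_apply, hv, map_zero]
  have hinf : LinearMap.ker (aeval T P) ⊓ LinearMap.ker (aeval T Q) = ⊥ := by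
    rw [Submodule.eq_bot_iff]
    rintro v ⟨hv1, hv2⟩
    rw [SetLike.mem_coe, LinearMap.mem_ker] at hv1 hv2
    have := key v
    rw [map_mul, map_mul, Module.End.mul_apply, Module.End.mul_apply, hv1, hv2,
      map_zero, map_zero, add_zero] at this
    exact this.symm
  have hsup : LinearMap.ker (aeval T (P*Q)) = LinearMap.ker (aeval T P) ⊔ LinearMap.ker (aeval T Q) := by
    apply le_antisymm
    · intro v hv
      rw [LinearMap.mem_ker] at hv
      rw [Submodule.mem_sup]
      refine ⟨(aeval T (c*Q)) v, ?_, (aeval T (a*P)) v, ?_, by rw [add_comm]; exact key v⟩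
      · rw [LinearMap.mem_ker, ← Module.End.mul_apply, ← map_mul]
        have : P * (c * Q) = c * (P * Q) := by ring
        rw [this, map_mul, Module.End.mul_apply, hv, map_zero]
      · rw [LinearMap.mem_ker, ← Module.End.mul_apply, ← map_mul]
        have : Q * (a * P) = a * (P * Q) := by ring
        rw [this, map_mul, Module.End.mul_apply, hv, map_zero]
    · rw [sup_le_iff]
      exact ⟨hPQ, hQP⟩
  refine ⟨hinf, hsup, ?_, ?_⟩
  · intro u hu v hv
    rw [LinearMap.mem_ker] at hu hv
    have hu' : u = (aeval T (c*Q)) u := by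
      have := key u
      rw [map_mul (aeval T) a P, Module.End.mul_apply, hu, map_zero, zero_add] at this
      exact this.symm
    rw [hu', sa_aeval hsa, map_mul, Module.End.mul_apply, hv, map_zero, map_zero]
  · have := Submodule.finrank_sup_add_finrank_inf_eq
      (LinearMap.ker (aeval T P)) (LinearMap.ker (aeval T Q))
    rw [hinf, finrank_bot, add_zero] at this
    rw [hsup, this]


theorem eval_eq_zero_of_eigen_mem {P : ℝ[X]} {v : V} {lam : ℝ}
    (hv : v ∈ LinearMap.ker (aeval T P)) (hTv : T v = lam • v) (hne : v ≠ 0) :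
    P.eval lam = 0 := by
  have hev : Module.End.HasEigenvector (T : Module.End ℝ V) lam v :=
    ⟨Module.End.mem_eigenspace_iff.mpr hTv, hne⟩
  have h1 : aeval T P v = P.eval lam • v := Module.End.aeval_apply_of_hasEigenvector hev
  rw [LinearMap.mem_ker] at hv
  rw [hv] at h1
  rcases smul_eq_zero.mp h1.symm with h | h
  · exact h
  · exact absurd h hne

theorem merge_bound
    (hsig : ∀ i j, g (b i) (b j) = if i = j then (if i = 0 then -1 else 1) else 0)
    (hsymm : ∀ u v : V, g u v = g v u)
    (hsa : ∀ u v : V, g (T u) v = g u (T v))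
    (hcon : ¬ Concl g T) {P Q : ℝ[X]} (hcop : IsCoprime P Q)
    (hP : KBound g T (LinearMap.ker (aeval T P)))
    (hQ : KBound g T (LinearMap.ker (aeval T Q))) :
    KBound g T (LinearMap.ker (aeval T (P*Q))) := by
  obtain ⟨hinf, hsup, horth, hrank⟩ := split_ker hsa hcop
  obtain ⟨s1, z1, hs1, hz1, hsp1, hzv1, hd1⟩ := hP
  obtain ⟨s2, z2, hs2, hz2, hsp2, hzv2, hd2⟩ := hQ
  have hPle : LinearMap.ker (aeval T P) ≤ LinearMap.ker (aeval T (P*Q)) := by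
    rw [hsup]; exact le_sup_left
  have hQle : LinearMap.ker (aeval T Q) ≤ LinearMap.ker (aeval T (P*Q)) := by
    rw [hsup]; exact le_sup_right
  have hindep : ∀ v₁ ∈ LinearMap.ker (aeval T P), ∀ v₂ ∈ LinearMap.ker (aeval T Q),
      v₁ ≠ 0 → ∀ al : ℝ, v₁ = al • v₂ → False := by
    intro v₁ hv₁ v₂ hv₂ hne al hal
    have : v₁ ∈ LinearMap.ker (aeval T Q) := by
      rw [hal]
      exact Submodule.smul_mem _ _ hv₂
    have : v₁ ∈ LinearMap.ker (aeval T P) ⊓ LinearMap.ker (aeval T Q) := ⟨hv₁, this⟩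
    rw [hinf] at this
    exact hne (Submodule.mem_bot ℝ |>.mp this)
  -- s and z collisions are impossible
  have hscol : s1 = 1 → s2 = 1 → False := by
    intro h1 h2
    obtain ⟨v₁, lam₁, hv₁, hT₁, hq₁⟩ := hsp1 (by omega)
    obtain ⟨v₂, lam₂, hv₂, hT₂, hq₂⟩ := hsp2 (by omega)
    have hne₁ : v₁ ≠ 0 := by rintro rfl; simp at hq₁
    have hne₂ : v₂ ≠ 0 := by rintro rfl; simp at hq₂
    by_cases hll : lam₁ = lam₂
    · subst hll
      have he1 : P.eval lam₁ = 0 := eval_eq_zero_of_eigen_mem hv₁ hT₁ hne₁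
      have he2 : Q.eval lam₁ = 0 := eval_eq_zero_of_eigen_mem hv₂ hT₂ hne₂
      obtain ⟨aa, cc, hac⟩ := hcop
      have := congrArg (fun r => Polynomial.eval lam₁ r) hac
      simp only [eval_add, eval_mul, he1, he2, mul_zero, add_zero, eval_one] at this
      norm_num at this
    · exact hcon (conclude_of_pair hsymm hT₁ hT₂ hq₁ hq₂ (eigen_orth hsa hT₁ hT₂ hll))
  have hzcol : z1 = 1 → z2 = 1 → False := by
    intro h1 h2
    obtain ⟨v₁, hv₁, hne₁, hq₁⟩ := hzv1 (by omega)
    obtain ⟨v₂, hv₂, hne₂, hq₂⟩ := hzv2 (by omega)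
    exact pair_contra hsig hsymm hq₁ hq₂ (horth v₁ hv₁ v₂ hv₂) hne₁ hne₂
      (hindep v₁ hv₁ v₂ hv₂ hne₁)
  refine ⟨s1 + s2, z1 + z2, ?_, ?_, ?_, ?_, ?_⟩
  · rcases Nat.lt_or_ge (s1 + s2) 2 with h | h
    · omega
    · exfalso; exact hscol (by omega) (by omega)
  · rcases Nat.lt_or_ge (z1 + z2) 2 with h | h
    · omega
    · exfalso; exact hzcol (by omega) (by omega)
  · intro h
    rcases Nat.lt_or_ge 0 s1 with h1 | h1
    · obtain ⟨v, lam, hv, hT, hq⟩ := hsp1 h1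
      exact ⟨v, lam, hPle hv, hT, hq⟩
    · have h2 : 0 < s2 := by omega
      obtain ⟨v, lam, hv, hT, hq⟩ := hsp2 h2
      exact ⟨v, lam, hQle hv, hT, hq⟩
  · intro h
    rcases Nat.lt_or_ge 0 z1 with h1 | h1
    · obtain ⟨v, hv, hne, hq⟩ := hzv1 h1
      exact ⟨v, hPle hv, hne, hq⟩
    · have h2 : 0 < z2 := by omega
      obtain ⟨v, hv, hne, hq⟩ := hzv2 h2
      exact ⟨v, hQle hv, hne, hq⟩
  · omega


theorem base_prime
    (hsig : ∀ i j, g (b i) (b j) = if i = j then (if i = 0 then -1 else 1) else 0)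
    (hsymm : ∀ u v : V, g u v = g v u)
    (hsa : ∀ u v : V, g (T u) v = g u (T v))
    (hcon : ¬ Concl g T) {p : ℝ[X]} (hpm : p.Monic) (hpirr : Irreducible p)
    (n : ℕ) (hn : 1 ≤ n) :
    KBound g T (LinearMap.ker (aeval T (p^n))) := by
  have hker : LinearMap.ker (aeval T (p^n)) = LinearMap.ker ((aeval T p)^n) := by
    rw [map_pow]
  have hdle : p.natDegree ≤ 2 := hpirr.natDegree_le_two
  have hdpos : 0 < p.natDegree := hpirr.natDegree_pos
  rcases Nat.lt_or_ge p.natDegree 2 with hd | hd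
  · -- degree 1
    have hd1 : p.natDegree = 1 := by omega
    have hp1 : p = X - C (-(p.coeff 0)) := by
      rw [map_neg, sub_neg_eq_add]
      exact hpm.eq_X_add_C hd1
    rw [hker, hp1]
    exact base_linear hsig hsymm hsa hcon (-(p.coeff 0)) n hn
  · have hd2 : p.natDegree = 2 := by omega
    rw [hker]
    exact base_quad hsig hsymm hsa hpm hpirr hd2 n hn

theorem all_bound
    (hsig : ∀ i j, g (b i) (b j) = if i = j then (if i = 0 then -1 else 1) else 0)
    (hsymm : ∀ u v : V, g u v = g v u)
    (hsa : ∀ u v : V, g (T u) v = g u (T v))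
    (hcon : ¬ Concl g T) :
    ∀ (n : ℕ) (P : ℝ[X]), P ≠ 0 → P.natDegree ≤ n →
      KBound g T (LinearMap.ker (aeval T P)) := by
  intro n
  induction n using Nat.strong_induction_on with
  | _ n ih =>
    intro P hP0 hPdeg
    by_cases hu : IsUnit P
    · -- unit: kernel is ⊥
      obtain ⟨r, hr, hrC⟩ := Polynomial.isUnit_iff.mp hu
      have : LinearMap.ker (aeval T P) = ⊥ := by
        rw [← hrC]
        rw [Submodule.eq_bot_iff]
        intro v hv
        rw [LinearMap.mem_ker, aeval_C] at hv
        have hrne : r ≠ 0 := hr.ne_zero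
        have : r • v = 0 := by
          rw [← hv]
          simp [Module.algebraMap_end_apply]
        rcases smul_eq_zero.mp this with h | h
        · exact absurd h hrne
        · exact h
      refine ⟨0, 0, by omega, by omega, fun h => absurd h (by omega),
        fun h => absurd h (by omega), ?_⟩
      rw [this]
      have : finrank ℝ (⊥ : Submodule ℝ V) = 0 := finrank_bot ℝ V
      omega
    · obtain ⟨p, hpm, hpirr, hpdvd⟩ := Polynomial.exists_monic_irreducible_factor P hu
      obtain ⟨m, R, hndvd, hPeq⟩ := WfDvdMonoid.max_power_factor hP0 hpirr
      have hm1 : 1 ≤ m := by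
        by_contra hm
        have : m = 0 := by omega
        rw [this, pow_zero, one_mul] at hPeq
        rw [hPeq] at hpdvd
        exact hndvd hpdvd
      have hR0 : R ≠ 0 := by
        intro h
        rw [h, mul_zero] at hPeq
        exact hP0 hPeq
      have hpn0 : p^m ≠ 0 := pow_ne_zero m hpm.ne_zero
      have hdegs : P.natDegree = m * p.natDegree + R.natDegree := by
        rw [hPeq, natDegree_mul hpn0 hR0, natDegree_pow]
      have hdR : R.natDegree < n := by
        have hmul : 0 < m * p.natDegree := Nat.mul_pos (by omega) hpirr.natDegree_pos
        omega
      have hcop : IsCoprime (p^m) R := (hpirr.coprime_pow_of_not_dvd m hndvd).symm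
      have hKp : KBound g T (LinearMap.ker (aeval T (p^m))) :=
        base_prime hsig hsymm hsa hcon hpm hpirr m hm1
      have hKR : KBound g T (LinearMap.ker (aeval T R)) :=
        ih R.natDegree hdR R hR0 le_rfl
      rw [hPeq]
      exact merge_bound hsig hsymm hsa hcon hcop hKp hKR
end

theorem stmt_7 {V : Type*} [AddCommGroup V] [Module ℝ V] [FiniteDimensional ℝ V]
    (hdim : finrank ℝ V = 5)
    (g : LinearMap.BilinForm ℝ V)
    (hsymm : ∀ u v : V, g u v = g v u)
    (hsig : ∃ b : Basis (Fin 5) ℝ V, ∀ i j, g (b i) (b j) =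
      if i = j then (if i = 0 then -1 else 1) else 0)
    (T : V →ₗ[ℝ] V)
    (hsa : ∀ u v : V, g (T u) v = g u (T v)) :
    ∃ W : Submodule ℝ V, finrank ℝ W = 2 ∧ (∀ w ∈ W, T w ∈ W) ∧
      ∀ w ∈ W, w ≠ 0 → 0 < g w w := by
  obtain ⟨b, hsigb⟩ := hsig
  by_contra hcon
  have hcon' : ¬ Concl g T := hcon
  set P := LinearMap.charpoly T with hP
  have hP0 : P ≠ 0 := (LinearMap.charpoly_monic T).ne_zero
  have hann : aeval T P = 0 := LinearMap.aeval_self_charpoly T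
  have hker : LinearMap.ker (aeval T P) = ⊤ := by
    rw [hann]
    exact LinearMap.ker_zero
  obtain ⟨s, z, hs, hz, _, _, hbound⟩ :=
    all_bound hsigb hsymm hsa hcon' P.natDegree P hP0 le_rfl
  rw [hker, finrank_top, hdim] at hbound
  omega
end

section
/- Let V be a real vector space with a symmetric bilinear form g, and T : V → V a g-self-adjoint operator. Suppose N is a T-invariant subspace of V on which g is positive semidefinite and degenerate, spanned by a null vector n and spacelike vectors x₁,…,x_{r−1} all g-orthogonal to n and to each other (so N is a null r-subspace, r ≥ 2). Then n is an eigenvector of T. -/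
/-! Since `n` is `g`-orthogonal to all of `N`, the `xⱼ`-coefficient of `T n ∈ N` is
`g (xⱼ) (T n) = g (T xⱼ) n = 0`, so `T n` is a multiple of `n`. -/

open Submodule

namespace LinearMap.BilinForm

variable {R V ι : Type*} [CommRing R] [AddCommGroup V] [Module R V] [Fintype ι] [DecidableEq ι]
  {g : LinearMap.BilinForm R V} {x : ι → V}

lemma apply_sum_smul_of_orthonormal (hortho : ∀ i j, g (x i) (x j) = if i = j then 1 else 0)
    (c : ι → R) (j : ι) : g (x j) (∑ i, c i • x i) = c j := by
  simp [map_sum, hortho]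

lemma exists_eq_smul_of_mem_span_insert_of_orthogonal
    (hortho : ∀ i j, g (x i) (x j) = if i = j then 1 else 0) {n v : V}
    (hxn : ∀ i, g (x i) n = 0) (hv : v ∈ span R (insert n (Set.range x)))
    (hxv : ∀ j, g (x j) v = 0) : ∃ a : R, v = a • n := by
  obtain ⟨a, z, hz, rfl⟩ := mem_span_insert.1 hv
  obtain ⟨c, rfl⟩ := (mem_span_range_iff_exists_fun R).1 hz
  have hc : c = 0 := funext fun j => by
    simpa [hxn, apply_sum_smul_of_orthonormal hortho] using hxv j
  exact ⟨a, by simp [hc]⟩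

end LinearMap.BilinForm

open LinearMap.BilinForm in
theorem stmt_9_general {V : Type*} [AddCommGroup V] [Module ℝ V]
    (g : LinearMap.BilinForm ℝ V)
    (hsymm : ∀ u v : V, g u v = g v u)
    (T : V →ₗ[ℝ] V)
    (hsa : ∀ u v : V, g (T u) v = g u (T v))
    (r : ℕ)
    (n : V) (hnnull : g n n = 0)
    (x : Fin (r - 1) → V)
    (hortho : ∀ i j, g (x i) (x j) = if i = j then 1 else 0)
    (hnx : ∀ i, g n (x i) = 0)
    (N : Submodule ℝ V) (hN : N = Submodule.span ℝ ({n} ∪ Set.range x))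
    (hinv : ∀ v ∈ N, T v ∈ N) :
    ∃ α : ℝ, T n = α • n := by
  rw [Set.singleton_union] at hN
  have hnN : n ∈ N := hN ▸ subset_span (Set.mem_insert n _)
  have hxN (i) : x i ∈ N := hN ▸ subset_span (Set.mem_insert_of_mem n ⟨i, rfl⟩)
  have hN_ortho : N ≤ LinearMap.ker (g n) := by
    rw [hN, span_le]
    rintro _ (rfl | ⟨i, rfl⟩)
    exacts [hnnull, hnx i]
  refine exists_eq_smul_of_mem_span_insert_of_orthogonal hortho (fun i => ?_)
    (hN ▸ hinv n hnN) (fun j => ?_)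
  · rw [hsymm, hnx]
  · rw [← hsa, hsymm]
    exact hN_ortho (hinv _ (hxN j))

theorem stmt_9 {V : Type*} [AddCommGroup V] [Module ℝ V]
    (g : LinearMap.BilinForm ℝ V)
    (hsymm : ∀ u v : V, g u v = g v u)
    (T : V →ₗ[ℝ] V)
    (hsa : ∀ u v : V, g (T u) v = g u (T v))
    (r : ℕ) (hr : 2 ≤ r)
    (n : V) (hn0 : n ≠ 0) (hnnull : g n n = 0)
    (x : Fin (r - 1) → V)
    (hortho : ∀ i j, g (x i) (x j) = if i = j then 1 else 0)
    (hnx : ∀ i, g n (x i) = 0)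
    (N : Submodule ℝ V) (hN : N = Submodule.span ℝ ({n} ∪ Set.range x))
    (hinv : ∀ v ∈ N, T v ∈ N) :
    ∃ α : ℝ, T n = α • n :=
  stmt_9_general g hsymm T hsa r n hnnull x hortho hnx N hN hinv
end

section
/- Let V be a 5-dimensional real vector space with symmetric bilinear form g of signature (-,+,+,+,+) and semi-null pentad basis {l,m,x,y,z}. Define T by the Segre {311} canonical form: T l = ρ₁ l, T m = ρ₁ m + x, T x = ρ₁ x + l, T y = ρ₄ y, T z = ρ₅ z. Then l is the unique null eigendirection of T when ρ₁, ρ₄, ρ₅ are distinct, and the minimal polynomial of T has (X − ρ₁)³ as a factor (T has a Jordan block of size 3). -/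
open Module

theorem stmt_13 {V : Type*} [AddCommGroup V] [Module ℝ V] [FiniteDimensional ℝ V]
    (hdim : finrank ℝ V = 5)
    (g : LinearMap.BilinForm ℝ V)
    (hsymm : ∀ u v : V, g u v = g v u)
    (b : Basis (Fin 5) ℝ V)
    (l m x y z : V)
    (hb : b 0 = l ∧ b 1 = m ∧ b 2 = x ∧ b 3 = y ∧ b 4 = z)
    (hll : g l l = 0) (hmm : g m m = 0) (hlm : g l m = 1)
    (hxx : g x x = 1) (hyy : g y y = 1) (hzz : g z z = 1)
    (hlx : g l x = 0) (hly : g l y = 0) (hlz : g l z = 0)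
    (hmx : g m x = 0) (hmy : g m y = 0) (hmz : g m z = 0)
    (hxy : g x y = 0) (hxz : g x z = 0) (hyz : g y z = 0)
    (ρ₁ ρ₄ ρ₅ : ℝ) (h14 : ρ₁ ≠ ρ₄) (h15 : ρ₁ ≠ ρ₅) (h45 : ρ₄ ≠ ρ₅)
    (T : V →ₗ[ℝ] V)
    (hTl : T l = ρ₁ • l) (hTm : T m = ρ₁ • m + x) (hTx : T x = ρ₁ • x + l)
    (hTy : T y = ρ₄ • y) (hTz : T z = ρ₅ • z) :
    (∀ (v : V) (lam : ℝ), v ≠ 0 → g v v = 0 → T v = lam • v →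
      ∃ c : ℝ, v = c • l) ∧
    (Polynomial.X - Polynomial.C ρ₁) ^ 3 ∣ minpoly ℝ (T : Module.End ℝ V) := by
  obtain ⟨rfl, rfl, rfl, rfl, rfl⟩ := hb
  have h10 : g (b 1) (b 0) = 1 := (hsymm _ _).trans hlm
  have h20 : g (b 2) (b 0) = 0 := (hsymm _ _).trans hlx
  have h21 : g (b 2) (b 1) = 0 := (hsymm _ _).trans hmx
  have h30 : g (b 3) (b 0) = 0 := (hsymm _ _).trans hly
  have h31 : g (b 3) (b 1) = 0 := (hsymm _ _).trans hmy
  have h32 : g (b 3) (b 2) = 0 := (hsymm _ _).trans hxy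
  have h40 : g (b 4) (b 0) = 0 := (hsymm _ _).trans hlz
  have h41 : g (b 4) (b 1) = 0 := (hsymm _ _).trans hmz
  have h42 : g (b 4) (b 2) = 0 := (hsymm _ _).trans hxz
  have h43 : g (b 4) (b 3) = 0 := (hsymm _ _).trans hyz
  constructor
  · intro v lam hv0 hnull hvT
    obtain ⟨a, hv5⟩ : ∃ a : Fin 5 → ℝ,
        v = a 0 • b 0 + a 1 • b 1 + a 2 • b 2 + a 3 • b 3 + a 4 • b 4 := by
      refine ⟨fun i => b.repr v i, ?_⟩
      conv_lhs => rw [← b.sum_repr v]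
      rw [Fin.sum_univ_five]
    rw [hv5] at hvT hnull
    -- coefficient equations
    have e0 := congrArg (fun u => b.repr u 0) hvT
    have e1 := congrArg (fun u => b.repr u 1) hvT
    have e2 := congrArg (fun u => b.repr u 2) hvT
    simp only [map_add, map_smul, hTl, hTm, hTx, hTy, hTz, Basis.repr_self,
      Finsupp.smul_apply, Finsupp.add_apply, Finsupp.single_apply, smul_eq_mul] at e0 e1 e2
    simp at e0 e1 e2
    -- null condition
    simp only [map_add, map_smul, LinearMap.add_apply, LinearMap.smul_apply, smul_eq_mul,
      hll, hmm, hlm, hxx, hyy, hzz, hlx, hly, hlz, hmx, hmy, hmz, hxy, hxz, hyz,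
      h10, h20, h21, h30, h31, h32, h40, h41, h42, h43] at hnull
    ring_nf at hnull
    -- a 1 = 0
    have ha1 : a 1 = 0 := by
      by_cases hl : lam = ρ₁
      · subst hl; linear_combination e2
      · have h : (ρ₁ - lam) * a 1 = 0 := by linear_combination e1
        rcases mul_eq_zero.mp h with h | h
        · exact absurd (by linarith : lam = ρ₁) hl
        · exact h
    rw [ha1] at hnull
    have hn2 : a 2 ^ 2 + a 3 ^ 2 + a 4 ^ 2 = 0 := by linear_combination hnull
    clear hvT hnull e0 e1 e2
    have ha2 : a 2 = 0 := sq_eq_zero_iff.mp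
      (le_antisymm (by linarith [sq_nonneg (a 3), sq_nonneg (a 4)]) (sq_nonneg _))
    have ha3 : a 3 = 0 := sq_eq_zero_iff.mp
      (le_antisymm (by linarith [sq_nonneg (a 2), sq_nonneg (a 4)]) (sq_nonneg _))
    have ha4 : a 4 = 0 := sq_eq_zero_iff.mp
      (le_antisymm (by linarith [sq_nonneg (a 2), sq_nonneg (a 3)]) (sq_nonneg _))
    exact ⟨a 0, by rw [hv5, ha1, ha2, ha3, ha4]; simp⟩
  · set P := minpoly ℝ (T : Module.End ℝ V) with hP
    set N : Module.End ℝ V := T - algebraMap ℝ (Module.End ℝ V) ρ₁ with hN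
    set Q := P.comp (Polynomial.X + Polynomial.C ρ₁) with hQ
    have hNb1 : N (b 1) = b 2 := by
      simp [hN, LinearMap.sub_apply, hTm, Module.algebraMap_end_apply]
    have hNb2 : N (b 2) = b 0 := by
      simp [hN, LinearMap.sub_apply, hTx, Module.algebraMap_end_apply]
    have hNb0 : N (b 0) = 0 := by
      simp [hN, LinearMap.sub_apply, hTl, Module.algebraMap_end_apply]
    have hN3 : ∀ i : ℕ, (N ^ (3 + i)) (b 1) = 0 := by
      intro i
      rw [add_comm, pow_add]
      have : (N ^ 3) (b 1) = 0 := by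
        simp [pow_succ, Module.End.mul_apply, hNb1, hNb2, hNb0]
      rw [Module.End.mul_apply, this, map_zero]
    have hQ0 : Polynomial.aeval N Q = 0 := by
      rw [hQ, Polynomial.aeval_comp]
      have hX : Polynomial.aeval N (Polynomial.X + Polynomial.C ρ₁) = (T : Module.End ℝ V) := by
        simp [hN]
      rw [hX, hP]
      exact minpoly.aeval ℝ _
    have hs : ∑ i ∈ Finset.range (Q.natDegree + 3), Q.coeff i • (N ^ i) (b 1) = 0 := by
      have h := Polynomial.aeval_eq_sum_range' (p := Q)
        (show Q.natDegree < Q.natDegree + 3 by omega) N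
      have h2 := congrArg (fun f : Module.End ℝ V => f (b 1)) (h.symm.trans hQ0)
      simpa [LinearMap.sum_apply, LinearMap.smul_apply] using h2
    have hsum3 : Q.coeff 0 • b 1 + Q.coeff 1 • b 2 + Q.coeff 2 • b 0 = 0 := by
      have hsub : ∑ i ∈ Finset.range 3, Q.coeff i • (N ^ i) (b 1) = 0 := by
        rw [← hs]
        apply Finset.sum_subset (Finset.range_subset_range.mpr (by omega))
        intro i _ hi
        have h3 : 3 ≤ i := by simpa using hi
        obtain ⟨k, rfl⟩ := Nat.exists_eq_add_of_le h3
        rw [hN3 k, smul_zero]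
      simpa [Finset.sum_range_succ, pow_succ, Module.End.mul_apply, hNb1, hNb2] using hsub
    have c0 := congrArg (fun u => b.repr u 1) hsum3
    have c1 := congrArg (fun u => b.repr u 2) hsum3
    have c2 := congrArg (fun u => b.repr u 0) hsum3
    simp only [map_add, map_smul, map_zero, Basis.repr_self, Finsupp.smul_apply,
      Finsupp.add_apply, Finsupp.single_apply, Finsupp.coe_zero, Pi.zero_apply,
      smul_eq_mul] at c0 c1 c2
    simp at c0 c1 c2
    have hX3 : Polynomial.X ^ 3 ∣ Q := by
      rw [Polynomial.X_pow_dvd_iff]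
      intro d hd
      interval_cases d <;> assumption
    have hPQ : Q.comp (Polynomial.X - Polynomial.C ρ₁) = P := by
      rw [hQ, Polynomial.comp_assoc]
      simp [Polynomial.add_comp, Polynomial.sub_comp]
    obtain ⟨R, hR⟩ := hX3
    exact ⟨R.comp (Polynomial.X - Polynomial.C ρ₁), by
      rw [← hPQ, hR, Polynomial.mul_comp, Polynomial.pow_comp, Polynomial.X_comp]⟩
end

section
/- Let V be a 5-dimensional real vector space with symmetric bilinear form g of signature (-,+,+,+,+) and semi-null pentad {l,m,x,y,z}. Define T corresponding to the Segre {zz̄111} canonical form: T l = ρ₁ l − ρ₂ m (with ρ₂ ≠ 0), T m = ρ₂ l + ρ₁ m, T x = ρ₃ x, T y = ρ₄ y, T z = ρ₅ z. Then T is g-self-adjoint, has exactly three real eigenvalues ρ₃, ρ₄, ρ₅ with spacelike eigenvectors, and has no real timelike or null eigenvector. -/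
/-!
On the basis `l, m, x, y, z` the operator `T` is block diagonal: a rotation–dilation block on the
null plane spanned by `l, m`, and the diagonal `diag(ρ₃, ρ₄, ρ₅)` on the orthonormal triple
`x, y, z`. Self-adjointness is checked on pairs of basis vectors; for the rotation block it comes
down to `ρ₂ (g l l + g m m) = 0`. Since `ρ₂ ≠ 0` the block `[[ρ₁ - μ, ρ₂], [-ρ₂, ρ₁ - μ]]` has
determinant `(ρ₁ - μ)² + ρ₂² > 0`, so an eigenvector has no `l, m` component. It therefore lies in
the Euclidean span of `x, y, z`, where the eigenvalues are read off the diagonal and `g v v` is a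
sum of three squares.
-/

open Module

theorem LinearMap.isSelfAdjoint_of_basis {R M N ι : Type*} [CommSemiring R] [AddCommMonoid M]
    [Module R M] [AddCommMonoid N] [Module R N] (B : M →ₗ[R] M →ₗ[R] N) (f : M →ₗ[R] M)
    (b : Basis ι R M) (h : ∀ i j, B (f (b i)) (b j) = B (b i) (f (b j))) :
    B.IsSelfAdjoint f :=
  isAdjointPair_iff_comp_eq_compl₂.mpr (ext_basis b b h)

theorem eq_zero_of_rotation_eq_zero {p q a b : ℝ} (hq : q ≠ 0)
    (h₁ : p * a + q * b = 0) (h₂ : -q * a + p * b = 0) : a = 0 ∧ b = 0 := by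
  have hsq : q * (a * a + b * b) = 0 := by linear_combination b * h₁ - a * h₂
  exact mul_self_add_mul_self_eq_zero.mp ((mul_eq_zero.mp hsq).resolve_left hq)

section SegreForm

variable {V : Type*} [AddCommGroup V] [Module ℝ V]

theorem segre_isSelfAdjoint (g : LinearMap.BilinForm ℝ V) (hsymm : ∀ u v : V, g u v = g v u)
    (b : Basis (Fin 5) ℝ V) {l m x y z : V} (hb : ⇑b = ![l, m, x, y, z])
    (hll : g l l = 0) (hmm : g m m = 0)
    (hlx : g l x = 0) (hly : g l y = 0) (hlz : g l z = 0)
    (hmx : g m x = 0) (hmy : g m y = 0) (hmz : g m z = 0)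
    (hxy : g x y = 0) (hxz : g x z = 0) (hyz : g y z = 0)
    {ρ₁ ρ₂ ρ₃ ρ₄ ρ₅ : ℝ} {T : V →ₗ[ℝ] V}
    (hTl : T l = ρ₁ • l - ρ₂ • m) (hTm : T m = ρ₂ • l + ρ₁ • m)
    (hTx : T x = ρ₃ • x) (hTy : T y = ρ₄ • y) (hTz : T z = ρ₅ • z) :
    g.IsSelfAdjoint T := by
  refine g.isSelfAdjoint_of_basis T b fun i j => ?_
  rw [hb]
  fin_cases i <;> fin_cases j <;>
    simp [hTl, hTm, hTx, hTy, hTz, hll, hmm, hlx, hly, hlz, hmx, hmy, hmz, hxy, hxz, hyz,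
      hsymm m l, hsymm x l, hsymm y l, hsymm z l, hsymm x m, hsymm y m, hsymm z m,
      hsymm y x, hsymm z x, hsymm z y]

theorem segre_eigenvector (b : Basis (Fin 5) ℝ V) {l m x y z : V} (hb : ⇑b = ![l, m, x, y, z])
    {ρ₁ ρ₂ ρ₃ ρ₄ ρ₅ : ℝ} (hρ₂ : ρ₂ ≠ 0) {T : V →ₗ[ℝ] V}
    (hTl : T l = ρ₁ • l - ρ₂ • m) (hTm : T m = ρ₂ • l + ρ₁ • m)
    (hTx : T x = ρ₃ • x) (hTy : T y = ρ₄ • y) (hTz : T z = ρ₅ • z)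
    {v : V} {μ : ℝ} (hv : T v = μ • v) :
    ∃ c d e : ℝ, v = c • x + d • y + e • z ∧
      (ρ₃ - μ) * c = 0 ∧ (ρ₄ - μ) * d = 0 ∧ (ρ₅ - μ) * e = 0 := by
  set k := b.repr v
  have hv_eq : v = k 0 • l + k 1 • m + k 2 • x + k 3 • y + k 4 • z := by
    simpa [Fin.sum_univ_five, hb] using (b.sum_repr v).symm
  have hcoord : ∑ i, ![(ρ₁ - μ) * k 0 + ρ₂ * k 1, -ρ₂ * k 0 + (ρ₁ - μ) * k 1,
      (ρ₃ - μ) * k 2, (ρ₄ - μ) * k 3, (ρ₅ - μ) * k 4] i • b i = 0 := by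
    rw [← sub_eq_zero.mpr hv, hv_eq]
    simp only [map_add, map_smul, hTl, hTm, hTx, hTy, hTz, Fin.sum_univ_five, hb, Matrix.cons_val]
    module
  have hk := Fintype.linearIndependent_iff.mp b.linearIndependent _ hcoord
  obtain ⟨hk0, hk1⟩ := eq_zero_of_rotation_eq_zero hρ₂ (hk 0) (hk 1)
  exact ⟨k 2, k 3, k 4, by simp [hv_eq, hk0, hk1], hk 2, hk 3, hk 4⟩

theorem apply_self_pos_of_orthonormal (g : LinearMap.BilinForm ℝ V)
    (hsymm : ∀ u v : V, g u v = g v u) {x y z : V}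
    (hxx : g x x = 1) (hyy : g y y = 1) (hzz : g z z = 1)
    (hxy : g x y = 0) (hxz : g x z = 0) (hyz : g y z = 0) {c d e : ℝ}
    (hv : c • x + d • y + e • z ≠ 0) :
    0 < g (c • x + d • y + e • z) (c • x + d • y + e • z) := by
  have hsq : g (c • x + d • y + e • z) (c • x + d • y + e • z) = c ^ 2 + d ^ 2 + e ^ 2 := by
    simp only [map_add, map_smul, LinearMap.add_apply, LinearMap.smul_apply, smul_eq_mul,
      hxx, hyy, hzz, hxy, hxz, hyz, hsymm y x, hsymm z x, hsymm z y]
    ring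
  rw [hsq]
  by_contra! hle
  obtain ⟨rfl, rfl, rfl⟩ : c = 0 ∧ d = 0 ∧ e = 0 := by
    refine ⟨?_, ?_, ?_⟩ <;> nlinarith [sq_nonneg c, sq_nonneg d, sq_nonneg e]
  simp at hv

end SegreForm

theorem stmt_14_general {V : Type*} [AddCommGroup V] [Module ℝ V]
    (g : LinearMap.BilinForm ℝ V)
    (hsymm : ∀ u v : V, g u v = g v u)
    (b : Basis (Fin 5) ℝ V)
    (l m x y z : V)
    (hb : b 0 = l ∧ b 1 = m ∧ b 2 = x ∧ b 3 = y ∧ b 4 = z)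
    (hll : g l l = 0) (hmm : g m m = 0)
    (hxx : g x x = 1) (hyy : g y y = 1) (hzz : g z z = 1)
    (hlx : g l x = 0) (hly : g l y = 0) (hlz : g l z = 0)
    (hmx : g m x = 0) (hmy : g m y = 0) (hmz : g m z = 0)
    (hxy : g x y = 0) (hxz : g x z = 0) (hyz : g y z = 0)
    (ρ₁ ρ₂ ρ₃ ρ₄ ρ₅ : ℝ) (hρ₂ : ρ₂ ≠ 0)
    (T : V →ₗ[ℝ] V)
    (hTl : T l = ρ₁ • l - ρ₂ • m) (hTm : T m = ρ₂ • l + ρ₁ • m)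
    (hTx : T x = ρ₃ • x) (hTy : T y = ρ₄ • y) (hTz : T z = ρ₅ • z) :
    (∀ u v : V, g (T u) v = g u (T v)) ∧
    (∀ μ : ℝ, (∃ v : V, v ≠ 0 ∧ T v = μ • v) ↔ (μ = ρ₃ ∨ μ = ρ₄ ∨ μ = ρ₅)) ∧
    (∀ (v : V) (μ : ℝ), v ≠ 0 → T v = μ • v → 0 < g v v) := by
  have hb' : ⇑b = ![l, m, x, y, z] := by
    obtain ⟨h0, h1, h2, h3, h4⟩ := hb
    ext i; fin_cases i <;> simpa
  refine ⟨segre_isSelfAdjoint g hsymm b hb' hll hmm hlx hly hlz hmx hmy hmz hxy hxz hyz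
    hTl hTm hTx hTy hTz, fun μ => ⟨?_, ?_⟩, ?_⟩
  · rintro ⟨v, hv0, hv⟩
    obtain ⟨c, d, e, rfl, hc, hd, he⟩ := segre_eigenvector b hb' hρ₂ hTl hTm hTx hTy hTz hv
    by_contra! hμ
    simp only [mul_eq_zero, sub_eq_zero] at hc hd he
    apply hv0
    simp [hc.resolve_left hμ.1.symm, hd.resolve_left hμ.2.1.symm, he.resolve_left hμ.2.2.symm]
  · rintro (rfl | rfl | rfl)
    · exact ⟨x, by simpa [hb'] using b.ne_zero 2, hTx⟩
    · exact ⟨y, by simpa [hb'] using b.ne_zero 3, hTy⟩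
    · exact ⟨z, by simpa [hb'] using b.ne_zero 4, hTz⟩
  · intro v μ hv0 hv
    obtain ⟨c, d, e, rfl, -⟩ := segre_eigenvector b hb' hρ₂ hTl hTm hTx hTy hTz hv
    exact apply_self_pos_of_orthonormal g hsymm hxx hyy hzz hxy hxz hyz hv0

theorem stmt_14 {V : Type*} [AddCommGroup V] [Module ℝ V] [FiniteDimensional ℝ V]
    (hdim : finrank ℝ V = 5)
    (g : LinearMap.BilinForm ℝ V)
    (hsymm : ∀ u v : V, g u v = g v u)
    (b : Basis (Fin 5) ℝ V)
    (l m x y z : V)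
    (hb : b 0 = l ∧ b 1 = m ∧ b 2 = x ∧ b 3 = y ∧ b 4 = z)
    (hll : g l l = 0) (hmm : g m m = 0) (hlm : g l m = 1)
    (hxx : g x x = 1) (hyy : g y y = 1) (hzz : g z z = 1)
    (hlx : g l x = 0) (hly : g l y = 0) (hlz : g l z = 0)
    (hmx : g m x = 0) (hmy : g m y = 0) (hmz : g m z = 0)
    (hxy : g x y = 0) (hxz : g x z = 0) (hyz : g y z = 0)
    (ρ₁ ρ₂ ρ₃ ρ₄ ρ₅ : ℝ) (hρ₂ : ρ₂ ≠ 0)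
    (T : V →ₗ[ℝ] V)
    (hTl : T l = ρ₁ • l - ρ₂ • m) (hTm : T m = ρ₂ • l + ρ₁ • m)
    (hTx : T x = ρ₃ • x) (hTy : T y = ρ₄ • y) (hTz : T z = ρ₅ • z) :
    (∀ u v : V, g (T u) v = g u (T v)) ∧
    (∀ μ : ℝ, (∃ v : V, v ≠ 0 ∧ T v = μ • v) ↔ (μ = ρ₃ ∨ μ = ρ₄ ∨ μ = ρ₅)) ∧
    (∀ (v : V) (μ : ℝ), v ≠ 0 → T v = μ • v → 0 < g v v) :=
  stmt_14_general g hsymm b l m x y z hb hll hmm hxx hyy hzz hlx hly hlz hmx hmy hmz hxy hxz hyz ρ₁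
    ρ₂ ρ₃ ρ₄ ρ₅ hρ₂ T hTl hTm hTx hTy hTz
end

section
/- Let V be a 5-dimensional real vector space with nondegenerate symmetric bilinear form g of signature (-,+,+,+,+), and let T be g-self-adjoint. If T has all eigenvalues real and is not diagonalizable over ℝ, then T has at least one null eigenvector. -/
open Module

theorem stmt_15 {V : Type*} [AddCommGroup V] [Module ℝ V] [FiniteDimensional ℝ V]
    (hdim : finrank ℝ V = 5)
    (g : LinearMap.BilinForm ℝ V)
    (hsymm : ∀ u v : V, g u v = g v u)
    (hnondeg : ∀ v : V, (∀ u : V, g v u = 0) → v = 0)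
    (hsig : ∃ b : Basis (Fin 5) ℝ V, ∀ i j, g (b i) (b j) =
      if i = j then (if i = 0 then -1 else 1) else 0)
    (T : V →ₗ[ℝ] V)
    (hsa : ∀ u v : V, g (T u) v = g u (T v))
    (hreal : Polynomial.Splits ((LinearMap.charpoly T).map (RingHom.id ℝ)))
    (hnondiag : ¬ ∃ (c : Basis (Fin 5) ℝ V) (μ : Fin 5 → ℝ),
      ∀ i, T (c i) = μ i • c i) :
    ∃ (v : V) (lam : ℝ), v ≠ 0 ∧ T v = lam • v ∧ g v v = 0 := by
  classical
  open Polynomial in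
  by_contra hno
  push_neg at hno
  -- hno : ∀ v lam, v ≠ 0 → T v = lam • v → g v v ≠ 0
  set S : Set V := {v | ∃ μ : ℝ, T v = μ • v} with hS
  -- key claim: if (T - μ)² v = 0 then (T - μ) v = 0
  have hK2 : ∀ (μ : ℝ) (v : V), ((T - μ • 1 : Module.End ℝ V) ^ 2) v = 0 →
      (T - μ • 1 : Module.End ℝ V) v = 0 := by
    intro μ v h2
    by_contra hw
    set N : Module.End ℝ V := T - μ • 1 with hNdef
    set w := N v with hwdef
    have hNw : N w = 0 := by
      rw [hwdef, ← Module.End.mul_apply, ← pow_two]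
      exact h2
    have hTw : T w = μ • w := by
      have := hNw
      rw [hNdef, LinearMap.sub_apply, LinearMap.smul_apply, Module.End.one_apply,
        sub_eq_zero] at this
      exact this
    have hgww : g w w = 0 := by
      have h1 : g w w = g (T v) w - μ * g v w := by
        rw [hwdef, hNdef, LinearMap.sub_apply, LinearMap.smul_apply, Module.End.one_apply]
        simp [smul_eq_mul]
      rw [h1, hsa v w, hTw]
      simp [smul_eq_mul]
    exact hno w μ hw hTw hgww
  -- iterate: if (T - μ)^k v = 0 then (T - μ) v = 0
  have hKk : ∀ (μ : ℝ) (k : ℕ) (v : V), ((T - μ • 1 : Module.End ℝ V) ^ k) v = 0 →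
      (T - μ • 1 : Module.End ℝ V) v = 0 := by
    intro μ k
    induction k with
    | zero =>
      intro v hv
      simp only [pow_zero, Module.End.one_apply] at hv
      rw [hv]; simp
    | succ k ih =>
      intro v hv
      have h' : ((T - μ • 1 : Module.End ℝ V) ^ k) ((T - μ • 1 : Module.End ℝ V) v) = 0 := by
        rw [← Module.End.mul_apply, ← pow_succ]
        exact hv
      have h2 := ih _ h'
      apply hK2
      rw [pow_two, Module.End.mul_apply]
      exact h2
  have haev : ∀ μ : ℝ, Polynomial.aeval T (X - C μ) = T - μ • 1 := by
    intro μ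
    rw [map_sub, Polynomial.aeval_X, Polynomial.aeval_C, Module.algebraMap_end_eq_smul_id]
    rfl
  have hker1 : ∀ (μ : ℝ) (k : ℕ),
      LinearMap.ker (Polynomial.aeval T ((X - C μ) ^ k)) ≤ Submodule.span ℝ S := by
    intro μ k v hv
    rw [LinearMap.mem_ker, map_pow, haev] at hv
    have hNv : (T - μ • 1) v = 0 := hKk μ k v hv
    rw [LinearMap.sub_apply, LinearMap.smul_apply, Module.End.one_apply, sub_eq_zero] at hNv
    exact Submodule.subset_span ⟨μ, hNv⟩
  have hmain : ∀ (s : Finset ℝ) (k : ℝ → ℕ),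
      LinearMap.ker (Polynomial.aeval T (∏ μ ∈ s, (X - C μ) ^ k μ)) ≤ Submodule.span ℝ S := by
    intro s k
    induction s using Finset.induction_on with
    | empty =>
      simp only [Finset.prod_empty, map_one]
      intro v hv
      rw [LinearMap.mem_ker, Module.End.one_apply] at hv
      rw [hv]; exact Submodule.zero_mem _
    | @insert a s ha ih =>
      rw [Finset.prod_insert ha]
      have hcop : IsCoprime ((X - C a) ^ k a) (∏ μ ∈ s, (X - C μ) ^ k μ) := by
        refine IsCoprime.prod_right fun b hb => ?_
        have hab : a ≠ b := fun h => ha (h ▸ hb)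
        exact (Polynomial.isCoprime_X_sub_C_of_isUnit_sub
          ((sub_ne_zero_of_ne hab).isUnit)).pow
      rw [← Polynomial.sup_ker_aeval_eq_ker_aeval_mul_of_coprime T hcop]
      exact sup_le (hker1 a _) ih
  -- the charpoly kills everything, so eigenvectors span
  have hch : LinearMap.charpoly T =
      ∏ μ ∈ (LinearMap.charpoly T).roots.toFinset,
        (X - C μ) ^ (LinearMap.charpoly T).roots.count μ := by
    conv_lhs => rw [Polynomial.Splits.eq_prod_roots_of_monic
      (by rwa [Polynomial.map_id] at hreal) (LinearMap.charpoly_monic T)]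
    rw [Finset.prod_multiset_map_count]
  have hspan : Submodule.span ℝ S = ⊤ := by
    refine top_unique fun v _ => ?_
    refine hmain (LinearMap.charpoly T).roots.toFinset
      (fun μ => (LinearMap.charpoly T).roots.count μ) ?_
    rw [LinearMap.mem_ker, ← hch, LinearMap.aeval_self_charpoly]
    rfl
  -- extract a basis of eigenvectors
  obtain ⟨b, hbS, hbsp, hbli⟩ := exists_linearIndependent ℝ S
  have hspb : ⊤ ≤ Submodule.span ℝ (Set.range ((↑) : b → V)) := by
    rw [Subtype.range_coe, hbsp, hspan]
  let B : Basis b ℝ V := Basis.mk hbli hspb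
  have : Fintype b := FiniteDimensional.fintypeBasisIndex B
  have hcard : Fintype.card b = 5 := by
    rw [← Module.finrank_eq_card_basis B, hdim]
  let e := Fintype.equivFinOfCardEq hcard
  let c : Basis (Fin 5) ℝ V := B.reindex e
  have hc : ∀ i, ∃ μ : ℝ, T (c i) = μ • c i := by
    intro i
    have hmem : (c i : V) ∈ S := by
      have : c i = ((e.symm i : b) : V) := by
        simp [c, B, Module.Basis.reindex_apply, Basis.mk_apply]
      rw [this]
      exact hbS (e.symm i).2
    exact hmem
  choose μ hμ using hc
  exact hnondiag ⟨c, μ, hμ⟩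
end

section
/- Let V be a 5-dimensional real vector space with symmetric bilinear form g of signature (-,+,+,+,+), and T a g-self-adjoint operator. Suppose T has a 4-dimensional T-invariant subspace N on which g is positive semidefinite with 1-dimensional radical (a null 4-subspace). Then the radical of g|_N is spanned by a null eigenvector of T. -/
open Module

theorem LinearMap.BilinForm.apply_mem_radical_of_selfAdjoint {R M : Type*} [CommSemiring R]
    [AddCommMonoid M] [Module R M] {B : LinearMap.BilinForm R M} {T : M →ₗ[R] M}
    (hT : ∀ u v, B (T u) v = B u (T v)) {N : Submodule R M} (hN : ∀ v ∈ N, T v ∈ N)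
    {r : M} (hr : ∀ w ∈ N, B r w = 0) :
    ∀ w ∈ N, B (T r) w = 0 := fun w hw => by
  rw [hT]
  exact hr (T w) (hN w hw)

theorem stmt_17_general {V : Type*} [AddCommGroup V] [Module ℝ V]
    (g : LinearMap.BilinForm ℝ V)
    (T : V →ₗ[ℝ] V)
    (hsa : ∀ u v : V, g (T u) v = g u (T v))
    (N : Submodule ℝ V)
    (hinv : ∀ v ∈ N, T v ∈ N)
    (hrad : ∃ r : V, r ∈ N ∧ r ≠ 0 ∧ (∀ w ∈ N, g r w = 0) ∧
      ∀ u ∈ N, (∀ w ∈ N, g u w = 0) → ∃ c : ℝ, u = c • r) :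
    ∃ v : V, v ∈ N ∧ v ≠ 0 ∧ g v v = 0 ∧ (∀ w ∈ N, g v w = 0) ∧
      (∃ lam : ℝ, T v = lam • v) ∧
      ∀ u ∈ N, (∀ w ∈ N, g u w = 0) → ∃ c : ℝ, u = c • v := by
  obtain ⟨r, hrN, hr0, hr_rad, hr_span⟩ := hrad
  have hTr_rad := LinearMap.BilinForm.apply_mem_radical_of_selfAdjoint hsa hinv hr_rad
  obtain ⟨lam, hlam⟩ := hr_span (T r) (hinv r hrN) hTr_rad
  exact ⟨r, hrN, hr0, hr_rad r hrN, hr_rad, ⟨lam, hlam⟩, hr_span⟩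

theorem stmt_17 {V : Type*} [AddCommGroup V] [Module ℝ V] [FiniteDimensional ℝ V]
    (hdim : finrank ℝ V = 5)
    (g : LinearMap.BilinForm ℝ V)
    (hsymm : ∀ u v : V, g u v = g v u)
    (hsig : ∃ b : Basis (Fin 5) ℝ V, ∀ i j, g (b i) (b j) =
      if i = j then (if i = 0 then -1 else 1) else 0)
    (T : V →ₗ[ℝ] V)
    (hsa : ∀ u v : V, g (T u) v = g u (T v))
    (N : Submodule ℝ V) (hN4 : finrank ℝ N = 4)
    (hinv : ∀ v ∈ N, T v ∈ N)
    (hpsd : ∀ v ∈ N, 0 ≤ g v v)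
    (hrad : ∃ r : V, r ∈ N ∧ r ≠ 0 ∧ (∀ w ∈ N, g r w = 0) ∧
      ∀ u ∈ N, (∀ w ∈ N, g u w = 0) → ∃ c : ℝ, u = c • r) :
    ∃ v : V, v ∈ N ∧ v ≠ 0 ∧ g v v = 0 ∧ (∀ w ∈ N, g v w = 0) ∧
      (∃ lam : ℝ, T v = lam • v) ∧
      ∀ u ∈ N, (∀ w ∈ N, g u w = 0) → ∃ c : ℝ, u = c • v :=
  stmt_17_general g T hsa N hinv hrad
end
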